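/- arXiv:2106.06756 — 16 statements merged into one kernel-verified Lean document; each statement's English description precedes it below -/
import Mathlib

section
/- Let F be a field, let H be an m×n matrix over F, and suppose u ∈ F^n is a nonzero vector with Hu = 0 whose Hamming weight (number of nonzero coordinates) equals j. Then the j-th term of the epr-sequence of the symmetric matrix HᵀH is not A; that is, HᵀH has a singular j×j principal submatrix. Consequently, the minimum Hamming weight of a nonzero vector in the kernel of H is at least min{ j ∈ {1,…,n} : ℓ_j ≠ A }, where ℓ_1ℓ_2⋯ℓ_n is the epr-sequence of HᵀH. -/
open Matrix

/-- The `j`-th term of the epr-sequence of `B` is `A`: every `j × j`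
principal submatrix of `B` is nonsingular. -/
def eprA {F : Type*} [CommRing F] {n : ℕ} (B : Matrix (Fin n) (Fin n) F) (j : ℕ) : Prop :=
  ∀ f : Fin j → Fin n, Function.Injective f → (B.submatrix f f).det ≠ 0

/-- The Hamming weight of a vector: the number of nonzero coordinates. -/
def hammingWt {F : Type*} [Zero F] {n : ℕ} [DecidableEq F] (u : Fin n → F) : ℕ :=
  (Finset.univ.filter fun i => u i ≠ 0).card

lemma aux0 {F : Type*} [Field F] [DecidableEq F] {m n : ℕ}
    (H : Matrix (Fin m) (Fin n) F) (u : Fin n → F)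
    (hu : u ≠ 0) (hker : H.mulVec u = 0) :
    ∃ f : Fin (hammingWt u) → Fin n, Function.Injective f ∧
      ((Hᵀ * H).submatrix f f).det = 0 := by
  set s : Finset (Fin n) := Finset.univ.filter (fun i => u i ≠ 0) with hs
  have hcard : s.card = hammingWt u := rfl
  let e := s.orderIsoOfFin hcard
  have hj0 : 0 < hammingWt u := by
    obtain ⟨i, hi⟩ := Function.ne_iff.mp hu
    rw [Pi.zero_apply] at hi
    have hmem : i ∈ s := by simp [hs, hi]
    rw [← hcard]; exact Finset.card_pos.mpr ⟨i, hmem⟩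
  refine ⟨fun i => (e i : Fin n), ?_, ?_⟩
  · intro a b hab
    exact e.injective (Subtype.ext hab)
  · rw [← Matrix.exists_mulVec_eq_zero_iff]
    refine ⟨fun i => u (e i), ?_, ?_⟩
    · intro h0
      have h1 := congrFun h0 ⟨0, hj0⟩
      have hm : ((e ⟨0, hj0⟩ : s) : Fin n) ∈ s := (e ⟨0, hj0⟩).2
      simp only [hs, Finset.mem_filter] at hm
      exact hm.2 h1
    · funext i
      have key : ∀ t : Fin n, t ∉ s → (Hᵀ * H) (e i) t * u t = 0 := by
        intro t ht
        have hut : u t = 0 := by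
          by_contra h; exact ht (by simp [hs, h])
        simp [hut]
      calc ((Hᵀ * H).submatrix (fun i => ((e i : s) : Fin n))
              (fun i => ((e i : s) : Fin n))).mulVec (fun i => u (e i)) i
          = ∑ k : Fin (hammingWt u), (Hᵀ * H) (e i) (e k) * u (e k) := by
            simp [Matrix.mulVec, dotProduct]
        _ = ∑ t ∈ s, (Hᵀ * H) (e i) t * u t := by
            rw [← Finset.sum_attach s (fun t => (Hᵀ * H) (e i) t * u t)]
            exact Equiv.sum_comp e.toEquiv
              (fun t : s => (Hᵀ * H) (e i) (t : Fin n) * u t)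
        _ = ∑ t : Fin n, (Hᵀ * H) (e i) t * u t := by
            apply Finset.sum_subset (Finset.subset_univ s)
            intro t _ ht; exact key t ht
        _ = ((Hᵀ * H).mulVec u) (e i) := by
            simp [Matrix.mulVec, dotProduct]
        _ = (Hᵀ.mulVec (H.mulVec u)) (e i) := by
            rw [Matrix.mulVec_mulVec]
        _ = 0 := by rw [hker]; simp

theorem stmt0 {F : Type*} [Field F] [DecidableEq F] {m n j : ℕ}
    (H : Matrix (Fin m) (Fin n) F) (u : Fin n → F)
    (hu : u ≠ 0) (hker : H.mulVec u = 0)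
    (hj : hammingWt u = j) :
    (∃ f : Fin j → Fin n, Function.Injective f ∧ ((Hᵀ * H).submatrix f f).det = 0) ∧
    (∀ v : Fin n → F, v ≠ 0 → H.mulVec v = 0 →
      sInf {d : ℕ | (1 ≤ d ∧ d ≤ n) ∧ ¬ eprA (Hᵀ * H) d} ≤ hammingWt v) := by
  subst hj
  constructor
  · exact aux0 H u hu hker
  · intro v hv hkv
    obtain ⟨f, hfinj, hfdet⟩ := aux0 H v hv hkv
    apply Nat.sInf_le
    refine ⟨⟨?_, ?_⟩, ?_⟩
    · obtain ⟨i, hi⟩ := Function.ne_iff.mp hv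
      rw [Pi.zero_apply] at hi
      have : i ∈ (Finset.univ.filter fun i => v i ≠ 0) := by
        simp [hi]
      exact Finset.card_pos.mpr ⟨i, this⟩
    · simpa [hammingWt] using
        (Finset.card_filter_le Finset.univ fun i => v i ≠ 0)
    · intro hA
      exact hA f hfinj hfdet
end

section
/- Let F be a field and let B be an n×n symmetric matrix over F whose epr-sequence begins AN, i.e., every diagonal entry of B is nonzero (ℓ_1 = A) and every 2×2 principal minor of B is zero (ℓ_2 = N). Then there exists a symmetric matrix M ∈ F^{n×n} such that: (1) M has the same epr-sequence as B (for every j ∈ {1,…,n}, the j-th term of epr(M) equals the j-th term of epr(B)); (2) every entry of M equals 1 or −1; and (3) every diagonal entry of M and every entry in the first row and in the first column of M equals 1. -/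
open Matrix

/-- The `j`-th term of the epr-sequence of `B` is `N`: every `j × j`
principal submatrix of `B` is singular. -/
def eprN {F : Type*} [CommRing F] {n : ℕ} (B : Matrix (Fin n) (Fin n) F) (j : ℕ) : Prop :=
  ∀ f : Fin j → Fin n, Function.Injective f → (B.submatrix f f).det = 0

theorem stmt1 {F : Type*} [Field F] {n : ℕ} (hn : 2 ≤ n)
    (B : Matrix (Fin n) (Fin n) F) (hsym : B.IsSymm)
    (h1 : eprA B 1) (h2 : eprN B 2) :
    ∃ M : Matrix (Fin n) (Fin n) F, M.IsSymm ∧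
      (∀ j : ℕ, eprA M j ↔ eprA B j) ∧
      (∀ j : ℕ, eprN M j ↔ eprN B j) ∧
      (∀ i j : Fin n, M i j = 1 ∨ M i j = -1) ∧
      (∀ i : Fin n, M i i = 1) ∧
      (∀ j : Fin n, M ⟨0, by omega⟩ j = 1) ∧
      (∀ i : Fin n, M i ⟨0, by omega⟩ = 1) := by
  set z : Fin n := ⟨0, by omega⟩ with hz
  have hdiag : ∀ i : Fin n, B i i ≠ 0 := by
    intro i
    have := h1 (fun _ => i) (Function.injective_of_subsingleton _)
    simpa [Matrix.det_fin_one] using this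
  have hsq : ∀ i j : Fin n, B i j * B i j = B i i * B j j := by
    intro i j
    by_cases hij : i = j
    · subst hij; ring
    · have hf : Function.Injective (fun t : Fin 2 => if t = 0 then i else j) := by
        intro a b hab
        fin_cases a <;> fin_cases b <;> simp_all
      have := h2 _ hf
      rw [Matrix.det_fin_two] at this
      simp only [Matrix.submatrix_apply] at this
      norm_num at this
      have hji : B j i = B i j := hsym.apply i j
      rw [hji] at this
      linear_combination -this
  have hoff : ∀ i j : Fin n, B i j ≠ 0 := by
    intro i j h
    have h' := hsq i j
    rw [h, mul_zero] at h'
    rcases mul_eq_zero.mp h'.symm with h'' | h''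
    · exact hdiag i h''
    · exact hdiag j h''
  set e : Fin n → F := fun i => (B z i)⁻¹ with he
  have hene : ∀ i, e i ≠ 0 := fun i => inv_ne_zero (hoff z i)
  set M : Matrix (Fin n) (Fin n) F :=
    Matrix.of fun i j => B z z * (e i * B i j * e j) with hM
  have hMapply : ∀ i j, M i j = B z z * (e i * B i j * e j) := fun i j => rfl
  -- determinant relation
  have hdetrel : ∀ (j : ℕ) (f : Fin j → Fin n),
      (M.submatrix f f).det
        = B z z ^ j * ((∏ k, e (f k)) * (∏ k, e (f k))) * (B.submatrix f f).det := by
    intro j f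
    have hsub : M.submatrix f f
        = B z z • (Matrix.diagonal (e ∘ f) * (B.submatrix f f) * Matrix.diagonal (e ∘ f)) := by
      ext i k
      simp [hMapply, Matrix.mul_diagonal, Matrix.diagonal_mul, Matrix.smul_apply]
    rw [hsub, Matrix.det_smul, Matrix.det_mul, Matrix.det_mul, Matrix.det_diagonal]
    simp only [Function.comp, Fintype.card_fin, smul_eq_mul]
    ring
  have hfactor : ∀ (j : ℕ) (f : Fin j → Fin n),
      B z z ^ j * ((∏ k, e (f k)) * (∏ k, e (f k))) ≠ 0 := by
    intro j f
    have hp : (∏ k, e (f k)) ≠ 0 := Finset.prod_ne_zero_iff.mpr fun k _ => hene (f k)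
    exact mul_ne_zero (pow_ne_zero _ (hdiag z)) (mul_ne_zero hp hp)
  refine ⟨M, ?_, ?_, ?_, ?_, ?_, ?_, ?_⟩
  · ext i j
    simp only [Matrix.transpose_apply, hMapply]
    rw [hsym.apply i j]
    ring
  · intro j
    constructor <;> intro h f hf
    · have := h f hf
      rw [hdetrel] at this
      exact fun h0 => this (by rw [h0, mul_zero])
    · rw [hdetrel]
      exact mul_ne_zero (hfactor j f) (h f hf)
  · intro j
    constructor <;> intro h f hf
    · have := h f hf
      rw [hdetrel] at this
      exact (mul_eq_zero.mp this).resolve_left (hfactor j f)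
    · rw [hdetrel, h f hf, mul_zero]
  · intro i j
    rw [← mul_self_eq_one_iff, hMapply]
    have key : B z z * (e i * B i j * e j) * (B z z * (e i * B i j * e j))
        = (B z z * B z z * (B i j * B i j)) * ((B z i * B z i)⁻¹ * (B z j * B z j)⁻¹) := by
      simp only [he]; ring
    rw [key, hsq i j, hsq z i, hsq z j,
      show B z z * B z z * (B i i * B j j) = (B z z * B i i) * (B z z * B j j) by ring, ← mul_inv]
    exact mul_inv_cancel₀ (mul_ne_zero (mul_ne_zero (hdiag z) (hdiag i)) (mul_ne_zero (hdiag z) (hdiag j)))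
  · intro i
    rw [hMapply]
    have key : B z z * (e i * B i i * e i) = (B z z * B i i) * (B z i * B z i)⁻¹ := by
      simp only [he]; ring
    rw [key, hsq z i]
    exact mul_inv_cancel₀ (mul_ne_zero (hdiag z) (hdiag i))
  · intro j
    rw [hMapply]
    have key : B z z * (e z * B z j * e j) = (B z z * B z j) * (B z z * B z j)⁻¹ := by
      simp only [he]; ring
    rw [key]
    exact mul_inv_cancel₀ (mul_ne_zero (hdiag z) (hoff z j))
  · intro i
    rw [hMapply, hsym.apply z i]
    have key : B z z * (e i * B z i * e z) = (B z z * B z i) * (B z z * B z i)⁻¹ := by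
      simp only [he]; ring
    rw [key]
    exact mul_inv_cancel₀ (mul_ne_zero (hdiag z) (hoff z i))
end

section
/- Let F be a field of characteristic p > 0, let J_n denote the n×n all-ones matrix over F, and let I_n denote the n×n identity matrix over F. Then for every i ∈ {1,…,n}: if i ≡ 1 (mod p), then every i×i principal submatrix of J_n − I_n is singular (so the i-th term of epr(J_n − I_n) is N); and if i ≢ 1 (mod p), then every i×i principal submatrix of J_n − I_n is nonsingular (so the i-th term is A). In particular, no term of epr(J_n − I_n) equals S. -/
open Matrix

lemma detJI {F : Type*} [CommRing F] (i : ℕ) :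
    ((Matrix.of fun _ _ : Fin i => (1 : F)) - 1).det = (-1) ^ i * (1 - (i : F)) := by
  have h : (Matrix.of fun _ _ : Fin i => (1 : F)) - 1
      = -(1 + Matrix.replicateCol Unit (fun _ : Fin i => (-1 : F)) *
          Matrix.replicateRow Unit (fun _ : Fin i => (1 : F))) := by
    ext a b
    by_cases hab : a = b <;>
      simp [Matrix.mul_apply, Matrix.one_apply, sub_eq_add_neg, hab] <;> ring
  rw [h, Matrix.det_neg, Matrix.det_one_add_replicateCol_mul_replicateRow]
  simp [dotProduct, Fintype.card_fin]
  ring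

lemma detsub {F : Type*} [CommRing F] {n : ℕ} (J : Matrix (Fin n) (Fin n) F)
    (hJ : ∀ i j : Fin n, J i j = 1) {i : ℕ} (f : Fin i → Fin n) (hf : Function.Injective f) :
    ((J - 1).submatrix f f).det = (-1) ^ i * (1 - (i : F)) := by
  have : (J - 1).submatrix f f = (Matrix.of fun _ _ : Fin i => (1 : F)) - 1 := by
    ext a b
    simp [Matrix.submatrix, hJ, Matrix.one_apply, hf.eq_iff]
  rw [this, detJI]

theorem stmt2 {F : Type*} [Field F] (p : ℕ) [CharP F p] (hp : 0 < p) {n : ℕ}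
    (J : Matrix (Fin n) (Fin n) F) (hJ : ∀ i j : Fin n, J i j = 1) :
    ∀ i : ℕ, 1 ≤ i → i ≤ n →
      ((i ≡ 1 [MOD p]) → eprN (J - 1) i) ∧
      (¬(i ≡ 1 [MOD p]) → eprA (J - 1) i) := by
  intro i _ _
  have hcast : ((i : F) = (1 : ℕ)) ↔ i ≡ 1 [MOD p] := CharP.natCast_eq_natCast F p
  constructor
  · intro hmod f hf
    rw [detsub J hJ f hf]
    have : (i : F) = 1 := by simpa using hcast.2 hmod
    simp [this]
  · intro hmod f hf
    rw [detsub J hJ f hf]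
    have h1 : (i : F) ≠ 1 := fun h => hmod (hcast.1 (by simpa using h))
    intro h
    rcases mul_eq_zero.1 h with h | h
    · exact pow_ne_zero i (neg_ne_zero.2 one_ne_zero) h
    · exact h1 (by linear_combination -h)
end

section
/- Let F be a field of characteristic p > 2, let J_n denote the n×n all-ones matrix over F, and let I_n denote the n×n identity matrix over F. Then for every i ∈ {1,…,n}: if i ≡ 2 (mod p), then every i×i principal submatrix of J_n − 2I_n is singular (so the i-th term of epr(J_n − 2I_n) is N); and if i ≢ 2 (mod p), then every i×i principal submatrix of J_n − 2I_n is nonsingular (so the i-th term is A). In particular, no term of epr(J_n − 2I_n) equals S. -/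
open Matrix

lemma detJ2 {F : Type*} [Field F] (hch : (2:F) ≠ 0) (i : ℕ) :
    (Matrix.of (fun _ _ : Fin i => (1:F)) - 2).det = (-2)^i * (1 - (i:F) * 2⁻¹) := by
  have h2 : (2 : Matrix (Fin i) (Fin i) F) = 1 + 1 := (one_add_one_eq_two).symm
  have h : (Matrix.of (fun _ _ : Fin i => (1:F)) - 2)
      = (-2 : F) • (1 + replicateCol Unit (fun _ : Fin i => (-2⁻¹ : F)) * replicateRow Unit (fun _ : Fin i => (1:F))) := by
    ext a b
    simp only [h2, Matrix.smul_apply, Matrix.add_apply, Matrix.one_apply, Matrix.mul_apply,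
      Matrix.sub_apply, Matrix.of_apply, Matrix.replicateCol_apply, Matrix.replicateRow_apply,
      Finset.sum_const, Finset.card_univ, Fintype.card_unit, one_smul, smul_eq_mul]
    split <;> field_simp <;> ring
  rw [h, Matrix.det_smul, det_one_add_replicateCol_mul_replicateRow]
  simp only [dotProduct, Finset.sum_const, Finset.card_univ, Fintype.card_fin, nsmul_eq_mul]
  ring

lemma submatrixJ2 {F : Type*} [Field F] {n : ℕ} (J : Matrix (Fin n) (Fin n) F)
    (hJ : ∀ i j : Fin n, J i j = 1) {i : ℕ} (f : Fin i → Fin n) (hf : Function.Injective f) :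
    (J - 2).submatrix f f = Matrix.of (fun _ _ : Fin i => (1:F)) - 2 := by
  have h2 : ∀ m, (2 : Matrix (Fin m) (Fin m) F) = 1 + 1 := fun m => (one_add_one_eq_two).symm
  ext a b
  simp only [Matrix.submatrix_apply, Matrix.sub_apply, Matrix.of_apply, hJ, h2,
    Matrix.add_apply, Matrix.one_apply]
  by_cases hab : a = b
  · simp [hab]
  · simp [hab, hf.eq_iff]

theorem stmt3 {F : Type*} [Field F] (p : ℕ) [CharP F p] (hp : 2 < p) {n : ℕ}
    (J : Matrix (Fin n) (Fin n) F) (hJ : ∀ i j : Fin n, J i j = 1) :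
    ∀ i : ℕ, 1 ≤ i → i ≤ n →
      ((i ≡ 2 [MOD p]) → eprN (J - 2) i) ∧
      (¬(i ≡ 2 [MOD p]) → eprA (J - 2) i) := by
  have h2 : (2 : F) ≠ 0 := by
    rw [show (2 : F) = ((2 : ℕ) : F) by norm_num, Ne, CharP.cast_eq_zero_iff F p]
    intro h
    exact absurd (Nat.le_of_dvd (by norm_num) h) (by omega)
  intro i _ _
  have key : ∀ j : ℕ, ((j:F) = 2 ↔ j ≡ 2 [MOD p]) := by
    intro j
    rw [show (2 : F) = ((2 : ℕ) : F) by norm_num, ← sub_eq_zero,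
      show ((j:ℕ):F) - ((2:ℕ):F) = (((j:ℤ) - 2 : ℤ) : F) by push_cast; ring,
      CharP.intCast_eq_zero_iff F p, Nat.modEq_iff_dvd]
    push_cast
    exact dvd_sub_comm
  have hdet : ∀ f : Fin i → Fin n, Function.Injective f →
      ((J - 2).submatrix f f).det = (-2)^i * (1 - (i:F) * 2⁻¹) := by
    intro f hf
    rw [submatrixJ2 J hJ f hf, detJ2 h2]
  constructor
  · intro hmod f hf
    rw [hdet f hf]
    have : (i : F) = 2 := (key i).2 hmod
    rw [this]
    field_simp
    simp
  · intro hmod f hf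
    rw [hdet f hf]
    refine mul_ne_zero (pow_ne_zero _ (by simpa using h2)) ?_
    intro hz
    apply hmod
    apply (key i).1
    have h1 : (1:F) = (i:F) * 2⁻¹ := sub_eq_zero.mp hz
    field_simp at h1
    exact h1.symm
end

section
/- Let F be a field of characteristic p > 2 and let B be an n×n symmetric matrix over F (n ≥ 3) whose epr-sequence begins ANA, i.e., every 1×1 and every 3×3 principal minor of B is nonzero, and every 2×2 principal minor of B is zero. Then for every i with 4 ≤ i ≤ n: if i ≡ 2 (mod p), then every principal minor of B of order i is zero (ℓ_i = N); and if i ≢ 2 (mod p), then every principal minor of B of order i is nonzero (ℓ_i = A). -/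
open Matrix

lemma detC_eq {F : Type*} [Field F] (h2 : (2:F) ≠ 0) (i : ℕ) :
    (Matrix.of fun a b : Fin i => if a = b then (1:F) else -1).det
      = 2^i * (1 - i * 2⁻¹) := by
  have hmat : (Matrix.of fun a b : Fin i => if a = b then (1:F) else -1)
      = (2:F) • ((1 : Matrix (Fin i) (Fin i) F) +
          Matrix.replicateCol Unit (fun _ : Fin i => -(2:F)⁻¹) * Matrix.replicateRow Unit (fun _ : Fin i => (1:F))) := by
    ext a b
    simp only [Matrix.of_apply, Matrix.smul_apply, Matrix.add_apply, Matrix.one_apply,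
      Matrix.mul_apply, Matrix.replicateCol_apply, Matrix.replicateRow_apply, Finset.sum_const,
      Finset.card_univ, Fintype.card_unit, one_smul, smul_eq_mul]
    split_ifs <;> field_simp <;> norm_num
  rw [hmat, Matrix.det_smul, Matrix.det_one_add_replicateCol_mul_replicateRow, Fintype.card_fin]
  simp only [dotProduct, Pi.one_apply, one_mul, Finset.sum_const, Finset.card_univ,
    Fintype.card_fin, nsmul_eq_mul]
  ring

theorem stmt4 {F : Type*} [Field F] (p : ℕ) [CharP F p] (hp : 2 < p)
    {n : ℕ} (hn : 3 ≤ n) (B : Matrix (Fin n) (Fin n) F) (hsym : B.IsSymm)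
    (h1 : eprA B 1) (h2 : eprN B 2) (h3 : eprA B 3) :
    ∀ i : ℕ, 4 ≤ i → i ≤ n →
      ((i ≡ 2 [MOD p]) → eprN B i) ∧
      (¬(i ≡ 2 [MOD p]) → eprA B i) := by
  -- 2 ≠ 0 in F
  have h2F : (2:F) ≠ 0 := by
    intro h
    have : ((2:ℕ):F) = 0 := by push_cast; exact h
    rw [CharP.cast_eq_zero_iff F p] at this
    have := Nat.le_of_dvd (by norm_num) this
    omega
  -- diagonal entries nonzero
  have fact1 : ∀ k : Fin n, B k k ≠ 0 := by
    intro k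
    have := h1 (fun _ : Fin 1 => k) (Function.injective_of_subsingleton _)
    simpa [Matrix.det_fin_one] using this
  -- 2×2 principal minors vanish
  have fact2 : ∀ k l : Fin n, k ≠ l → B k l * B k l = B k k * B l l := by
    intro k l hkl
    have hinj : Function.Injective ![k, l] := by
      intro a b hab
      fin_cases a <;> fin_cases b <;> simp_all
    have := h2 ![k, l] hinj
    rw [Matrix.det_fin_two] at this
    simp only [Matrix.submatrix_apply] at this
    have hs : B l k = B k l := hsym.apply k l
    simp only [Matrix.cons_val_zero, Matrix.cons_val_one, Matrix.head_cons] at this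
    rw [hs] at this
    linear_combination -this
  -- 3×3 relation
  have fact3 : ∀ k l m : Fin n, k ≠ l → l ≠ m → k ≠ m →
      B k l * B l m * B m k = -(B k k * B l l * B m m) := by
    intro k l m hkl hlm hkm
    have hinj : Function.Injective ![k, l, m] := by
      intro a b hab
      fin_cases a <;> fin_cases b <;> simp_all
    have hd := h3 ![k, l, m] hinj
    rw [Matrix.det_fin_three] at hd
    simp only [Matrix.submatrix_apply, Matrix.cons_val_zero, Matrix.cons_val_one,
      Matrix.head_cons, Matrix.cons_val_two, Matrix.tail_cons] at hd
    have s1 : B l k = B k l := hsym.apply k l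
    have s2 : B m l = B l m := hsym.apply l m
    have s3 : B m k = B k m := hsym.apply k m
    have p1 := fact2 k l hkl
    have p2 := fact2 l m hlm
    have p3 := fact2 k m hkm
    rw [s1, s2, s3] at hd
    have hx : B k l * B l m * B k m ≠ B k k * B l l * B m m := by
      intro h
      apply hd
      linear_combination 2 * h - B m m * p1 - B k k * p2 - B l l * p3
    have hsq : (B k l * B l m * B k m - B k k * B l l * B m m) *
        (B k l * B l m * B k m + B k k * B l l * B m m) = 0 := by
      linear_combination (B l m * B l m * B k m * B k m) * p1 +
        (B k k * B l l * B k m * B k m) * p2 + (B k k * B l l * B l l * B m m) * p3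
    rcases mul_eq_zero.mp hsq with h | h
    · exact absurd (by linear_combination h) hx
    · rw [s3]
      linear_combination h
  intro i hi4 hin
  haveI : NeZero i := ⟨by omega⟩
  -- the key determinant formula
  have key : ∀ f : Fin i → Fin n, Function.Injective f →
      (B.submatrix f f 0 0) ^ i * (B.submatrix f f).det
        = (∏ a, (if a = 0 then -(B.submatrix f f 0 0) else B.submatrix f f a 0)) ^ 2
          * (2 ^ i * (1 - i * 2⁻¹)) := by
    intro f hf
    set m := B.submatrix f f with hm
    set u : Fin i → F := fun a => if a = 0 then -(m 0 0) else m a 0 with hu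
    have hmne : ∀ a b : Fin i, a ≠ b → f a ≠ f b := fun a b hab h => hab (hf h)
    have key1 : ∀ a b : Fin i, m 0 0 * m a b = u a * ((if a = b then 1 else -1) : F) * u b := by
      intro a b
      rcases eq_or_ne a 0 with ha | ha <;> rcases eq_or_ne b 0 with hb | hb
      · subst ha; subst hb; simp only [hu, if_pos rfl, eq_self_iff_true, if_true]; ring
      · subst ha
        have hs : m 0 b = m b 0 := hsym.apply (f b) (f 0)
        simp only [hu, if_pos rfl, if_neg hb, if_neg (Ne.symm hb)]
        rw [hs]; ring
      · subst hb
        simp only [hu, if_pos rfl, if_neg ha, if_neg ha]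
        ring
      · rcases eq_or_ne a b with hab | hab
        · subst hab
          have := fact2 (f a) (f 0) (hmne a 0 ha)
          simp only [hu, if_neg ha, if_pos rfl, eq_self_iff_true, if_true]
          simp only [hm, Matrix.submatrix_apply] at this ⊢
          linear_combination -this
        · have h3' := fact3 (f a) (f b) (f 0) (hmne a b hab) (hmne b 0 hb) (hmne a 0 ha)
          have p1 := fact2 (f a) (f 0) (hmne a 0 ha)
          have p2 := fact2 (f b) (f 0) (hmne b 0 hb)
          have s1 : B (f 0) (f a) = B (f a) (f 0) := hsym.apply (f a) (f 0)
          have ha0 : m a 0 ≠ 0 := by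
            intro h
            simp only [hm, Matrix.submatrix_apply] at h
            rw [h] at p1
            exact mul_ne_zero (fact1 (f a)) (fact1 (f 0)) (by linear_combination -p1)
          have hb0 : m b 0 ≠ 0 := by
            intro h
            simp only [hm, Matrix.submatrix_apply] at h
            rw [h] at p2
            exact mul_ne_zero (fact1 (f b)) (fact1 (f 0)) (by linear_combination -p2)
          simp only [hu, if_neg ha, if_neg hb, if_neg hab]
          have hcan : (m 0 0 * m a b) * (m a 0 * m b 0)
              = (u a * (-1) * u b) * (m a 0 * m b 0) := by
            simp only [hu, if_neg ha, if_neg hb]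
            simp only [hm, Matrix.submatrix_apply]
            rw [s1] at h3'
            linear_combination B (f 0) (f 0) * h3' + (B (f b) (f 0) * B (f b) (f 0)) * p1 +
              (B (f a) (f a) * B (f 0) (f 0)) * p2
          have := mul_right_cancel₀ (mul_ne_zero ha0 hb0) hcan
          simpa only [hu, if_neg ha, if_neg hb] using this
    have hmat : (m 0 0) • m
        = Matrix.diagonal u * (Matrix.of fun a b : Fin i => if a = b then (1:F) else -1)
            * Matrix.diagonal u := by
      ext a b
      rw [Matrix.mul_diagonal, Matrix.diagonal_mul]
      simpa [mul_assoc] using key1 a b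
    have hdet : (m 0 0) ^ i * m.det = (∏ a, u a) ^ 2 * (2 ^ i * (1 - i * 2⁻¹)) := by
      have h1' : ((m 0 0) • m).det = (m 0 0) ^ i * m.det := by
        rw [Matrix.det_smul, Fintype.card_fin]
      rw [← h1', hmat, Matrix.det_mul, Matrix.det_mul, Matrix.det_diagonal, detC_eq h2F]
      ring
    exact hdet
  have huprod : ∀ f : Fin i → Fin n, Function.Injective f →
      (∏ a, (if a = 0 then -(B.submatrix f f 0 0) else B.submatrix f f a 0)) ≠ 0 := by
    intro f hf
    apply Finset.prod_ne_zero_iff.mpr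
    intro a _
    rcases eq_or_ne a 0 with ha | ha
    · simp [ha, Matrix.submatrix_apply, fact1 (f 0)]
    · simp only [if_neg ha, Matrix.submatrix_apply]
      intro h
      have p1 := fact2 (f a) (f 0) (fun hh => ha (hf hh))
      rw [h] at p1
      exact mul_ne_zero (fact1 (f a)) (fact1 (f 0)) (by linear_combination -p1)
  have hm00 : ∀ f : Fin i → Fin n, (B.submatrix f f 0 0) ^ i ≠ 0 := by
    intro f
    exact pow_ne_zero _ (fact1 (f 0))
  constructor
  · -- i ≡ 2 [MOD p] : eprN
    intro hmod f hf
    have hcast : ((i:ℕ):F) = ((2:ℕ):F) := CharP.natCast_eq_natCast' F p hmod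
    have hfac : (1 - (i:F) * 2⁻¹) = 0 := by
      push_cast at hcast
      rw [hcast]
      field_simp
      ring
    have := key f hf
    rw [hfac] at this
    simp only [mul_zero] at this
    exact (mul_eq_zero.mp this).resolve_left (hm00 f)
  · -- otherwise : eprA
    intro hmod f hf
    have hcast : ((i:F)) ≠ ((2:ℕ):F) := by
      intro h
      exact hmod ((CharP.natCast_eq_natCast F p).mp (by push_cast; push_cast at h; exact_mod_cast h))
    have hfac : (1 - (i:F) * 2⁻¹) ≠ 0 := by
      intro h
      apply hcast
      push_cast
      field_simp at h
      linear_combination -h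
    intro hdet0
    have := key f hf
    rw [hdet0, mul_zero] at this
    have hne : (∏ a, (if a = 0 then -(B.submatrix f f 0 0) else B.submatrix f f a 0)) ^ 2
        * (2 ^ i * (1 - i * 2⁻¹)) ≠ 0 := by
      apply mul_ne_zero
      · exact pow_ne_zero _ (huprod f hf)
      · exact mul_ne_zero (pow_ne_zero _ h2F) hfac
    exact hne this.symm
end

section
/- Let p be a prime, let q be a power of p, and let F be a finite field with q elements. Let B be an n×n symmetric matrix over F all of whose diagonal entries are zero (so the epr-sequence of B begins with ℓ_1 = N). Let k be a positive integer, and suppose that every coloring of the 2-element subsets of an n-element set with q colors admits a (kp+1)-element subset all of whose 2-element subsets receive the same color (i.e., n ≥ R_q(kp+1)). Then for each i = 1, 2, …, k, the (ip+1)-th term of the epr-sequence of B is N or S; that is, B has a singular principal submatrix of order ip+1. -/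
open Matrix

theorem stmt5 {p q : ℕ} (hp : p.Prime) (hq : ∃ m : ℕ, 0 < m ∧ q = p ^ m)
    {F : Type*} [Field F] [Fintype F] (hF : Fintype.card F = q)
    {n : ℕ} (B : Matrix (Fin n) (Fin n) F) (hsym : B.IsSymm)
    (hdiag : ∀ i : Fin n, B i i = 0)
    (k : ℕ) (hk : 0 < k)
    -- `n ≥ R_q(kp+1)`: every `q`-coloring of the 2-element subsets of an
    -- `n`-element set has a monochromatic subset of size `k*p + 1`.
    (hRam : ∀ c : Fin n → Fin n → Fin q,
      ∃ (s : Finset (Fin n)) (a : Fin q), s.card = k * p + 1 ∧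
        ∀ i ∈ s, ∀ j ∈ s, i < j → c i j = a) :
    ∀ i : ℕ, 1 ≤ i → i ≤ k →
      ∃ f : Fin (i * p + 1) → Fin n, Function.Injective f ∧
        (B.submatrix f f).det = 0 := by
  -- characteristic
  have hpF : (p : F) = 0 := by
    obtain ⟨m, hm, hqm⟩ := hq
    have h0 : ((Fintype.card F : ℕ) : F) = 0 := FiniteField.cast_card_eq_zero F
    rw [hF, hqm, Nat.cast_pow] at h0
    exact pow_eq_zero_iff hm.ne' |>.mp h0
  have e : F ≃ Fin q := Fintype.equivFinOfCardEq hF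
  obtain ⟨s, a, hcard, hmono⟩ := hRam fun i j => e (B i j)
  set v := e.symm a with hv
  have hBv : ∀ i ∈ s, ∀ j ∈ s, i ≠ j → B i j = v := by
    intro i hi j hj hij
    rcases hij.lt_or_gt with h | h
    · have := hmono i hi j hj h
      rw [hv, ← this, Equiv.symm_apply_apply]
    · have := hmono j hj i hi h
      have hsij : B i j = B j i := by
        have := congrFun (congrFun hsym j) i
        simpa [Matrix.transpose_apply] using this
      rw [hsij, hv, ← this, Equiv.symm_apply_apply]
  intro i hi1 hik
  have hle : i * p + 1 ≤ s.card := by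
    rw [hcard]
    exact Nat.succ_le_succ (Nat.mul_le_mul_right p hik)
  obtain ⟨t, hts, htcard⟩ := Finset.exists_subset_card_eq hle
  let g := t.orderIsoOfFin htcard
  refine ⟨fun x => (g x : Fin n), ?_, ?_⟩
  · intro x y hxy
    exact g.injective (Subtype.ext hxy)
  · have hM : B.submatrix (fun x => ((g x : Fin n))) (fun x => ((g x : Fin n)))
        = (-v) • (1 + replicateCol Unit (fun _ => (-1 : F)) * replicateRow Unit (fun _ => (1 : F))) := by
      ext x y
      simp only [Matrix.submatrix_apply, Matrix.smul_apply, Matrix.add_apply,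
        Matrix.mul_apply, Matrix.replicateCol_apply, Matrix.replicateRow_apply, Fintype.sum_unique,
        smul_eq_mul]
      by_cases hxy : x = y
      · subst hxy
        simp [hdiag, Matrix.one_apply_eq]
      · have hne : (g x : Fin n) ≠ (g y : Fin n) := by
          intro h
          exact hxy (g.injective (Subtype.ext h))
        rw [hBv _ (hts (g x).2) _ (hts (g y).2) hne, Matrix.one_apply_ne hxy]
        ring
    rw [hM, Matrix.det_smul, Matrix.det_one_add_replicateCol_mul_replicateRow]
    have : (fun _ : Fin (i * p + 1) => (1 : F)) ⬝ᵥ (fun _ => (-1 : F))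
        = -(i * p + 1 : ℕ) := by
      simp [dotProduct, Finset.sum_const]
    rw [this]
    have hz : (1 : F) + -(i * p + 1 : ℕ) = 0 := by
      push_cast
      rw [hpF]
      ring
    rw [hz, mul_zero]
end

section
/- Let B be an n×n symmetric matrix over the field F_3 = Z/3Z all of whose diagonal entries are zero (so the epr-sequence of B begins with ℓ_1 = N). If n ≥ 230, then the 4-th term of the epr-sequence of B is N or S; that is, B has a singular 4×4 principal submatrix. -/
open Matrix

private lemma det4_formula (a b c d e g : ZMod 3) :
    (Matrix.of !![0,a,b,c; a,0,d,e; b,d,0,g; c,e,g,0]).det =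
      a^2*g^2 + b^2*e^2 + c^2*d^2 - 2*(a*g*e*b + a*g*d*c + d*c*e*b) := by
  rw [show ∀ M : Matrix (Fin 4) (Fin 4) (ZMod 3), Matrix.of M = M from fun _ => rfl]
  simp [Matrix.det_succ_row_zero, Fin.sum_univ_succ, Fin.succAbove,
    Fin.castSucc, Fin.castAdd, Fin.castLE]
  ring

private lemma help1 (b d g : ZMod 3) :
    (Matrix.of !![0,0,b,b; 0,0,d,d; b,d,0,g; b,d,g,0]).det = 0 := by
  rw [show ∀ M : Matrix (Fin 4) (Fin 4) (ZMod 3), Matrix.of M = M from fun _ => rfl]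
  simp [Matrix.det_succ_row_zero, Fin.sum_univ_succ, Fin.succAbove,
    Fin.castSucc, Fin.castAdd, Fin.castLE]

set_option synthInstance.maxSize 1000 in
set_option maxHeartbeats 1000000 in
private lemma help2aux : ∀ a b c d e g : ZMod 3, a ≠ 0 → b ≠ 0 → c ≠ 0 → d ≠ 0 → e ≠ 0 → g ≠ 0 →
    a*b*d = a*c*e → a*b*d = b*c*g →
    a^2*g^2 + b^2*e^2 + c^2*d^2 - 2*(a*g*e*b + a*g*d*c + d*c*e*b) = 0 := by decide

private lemma help2 (a b c d e g : ZMod 3) (ha : a ≠ 0) (hb : b ≠ 0) (hc : c ≠ 0) (hd : d ≠ 0)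
    (he : e ≠ 0) (hg : g ≠ 0) (h1 : a*b*d = a*c*e) (h2 : a*b*d = b*c*g) :
    (Matrix.of !![0,a,b,c; a,0,d,e; b,d,0,g; c,e,g,0]).det = 0 := by
  rw [det4_formula]; exact help2aux a b c d e g ha hb hc hd he hg h1 h2

private lemma zmod3_cases (x : ZMod 3) (h : x ≠ 0) : x = 1 ∨ x = 2 := by
  revert h; revert x; decide

private lemma two_vals : ∀ cval z z' : ZMod 3, cval ≠ 0 → z ≠ 0 → z' ≠ 0 → z ≠ cval →
    z' ≠ cval → z = z' := by decide

private lemma three_of_card {α : Type*} [DecidableEq α] (T : Finset α) (h : 3 ≤ T.card) :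
    ∃ w ∈ T, ∃ x ∈ T, ∃ y ∈ T, w ≠ x ∧ w ≠ y ∧ x ≠ y := by
  have hpos : 0 < T.card := by omega
  obtain ⟨w, hw⟩ := Finset.card_pos.mp hpos
  have h2 : 1 < (T.erase w).card := by
    rw [Finset.card_erase_of_mem hw]; omega
  obtain ⟨x, hx, y, hy, hxy⟩ := Finset.one_lt_card.mp h2
  exact ⟨w, hw, x, (Finset.mem_erase.mp hx).2, y, (Finset.mem_erase.mp hy).2,
    (Ne.symm (Finset.mem_erase.mp hx).1), (Ne.symm (Finset.mem_erase.mp hy).1), hxy⟩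

private lemma inj4 {α : Type*} {a b c d : α} (h1 : a ≠ b) (h2 : a ≠ c) (h3 : a ≠ d)
    (h4 : b ≠ c) (h5 : b ≠ d) (h6 : c ≠ d) : Function.Injective ![a,b,c,d] := by
  intro p q h
  fin_cases p <;> fin_cases q <;> simp_all

private lemma quad {n : ℕ} (B : Matrix (Fin n) (Fin n) (ZMod 3)) (hsym : B.IsSymm)
    (hdiag : ∀ i, B i i = 0) (hB : ∀ i j : Fin n, i ≠ j → B i j ≠ 0)
    (v u w x : Fin n) (hvu : v ≠ u) (hvw : v ≠ w) (hvx : v ≠ x) (huw : u ≠ w)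
    (hux : u ≠ x) (hwx : w ≠ x)
    (h1 : B v u * B v w * B u w = B v u * B v x * B u x)
    (h2 : B v u * B v w * B u w = B v w * B v x * B w x) :
    ∃ f : Fin 4 → Fin n, Function.Injective f ∧ (B.submatrix f f).det = 0 := by
  refine ⟨![v,u,w,x], inj4 hvu hvw hvx huw hux hwx, ?_⟩
  have hM : B.submatrix ![v,u,w,x] ![v,u,w,x] =
      Matrix.of !![0, B v u, B v w, B v x; B v u, 0, B u w, B u x;
                   B v w, B u w, 0, B w x; B v x, B u x, B w x, 0] := by
    rw [show ∀ M : Matrix (Fin 4) (Fin 4) (ZMod 3), Matrix.of M = M from fun _ => rfl]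
    ext p q
    fin_cases p <;> fin_cases q <;> simp [hdiag] <;> exact hsym.apply _ _
  rw [hM]
  exact help2 _ _ _ _ _ _ (hB v u hvu) (hB v w hvw) (hB v x hvx) (hB u w huw)
    (hB u x hux) (hB w x hwx) h1 h2

theorem stmt6 {n : ℕ} (hn : 230 ≤ n)
    (B : Matrix (Fin n) (Fin n) (ZMod 3)) (hsym : B.IsSymm)
    (hdiag : ∀ i : Fin n, B i i = 0) :
    ∃ f : Fin 4 → Fin n, Function.Injective f ∧ (B.submatrix f f).det = 0 := by
  have hcardn : Fintype.card (Fin n) = n := Fintype.card_fin n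
  by_cases h0 : ∃ i j : Fin n, i ≠ j ∧ B i j = 0
  · obtain ⟨i, j, hij, hBij⟩ := h0
    have hji : j ∈ Finset.univ.erase i := Finset.mem_erase.mpr ⟨Ne.symm hij, Finset.mem_univ j⟩
    have hscard : ((Finset.univ.erase i).erase j).card = n - 2 := by
      rw [Finset.card_erase_of_mem hji, Finset.card_erase_of_mem (Finset.mem_univ i),
        Finset.card_univ, hcardn]
      omega
    have hlt : (Finset.univ : Finset (ZMod 3 × ZMod 3)).card <
        ((Finset.univ.erase i).erase j).card := by
      rw [hscard, Finset.card_univ]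
      have : Fintype.card (ZMod 3 × ZMod 3) = 9 := by decide
      omega
    obtain ⟨k, hk, l, hl, hkl, heq⟩ :=
      Finset.exists_ne_map_eq_of_card_lt_of_maps_to hlt
        (f := fun k => ((B i k, B j k) : ZMod 3 × ZMod 3))
        (fun a _ => Finset.mem_univ _)
    have hik : B i l = B i k := (congrArg Prod.fst heq).symm
    have hjk : B j l = B j k := (congrArg Prod.snd heq).symm
    have hki : k ≠ i := (Finset.mem_erase.mp (Finset.mem_erase.mp hk).2).1
    have hkj : k ≠ j := (Finset.mem_erase.mp hk).1
    have hli : l ≠ i := (Finset.mem_erase.mp (Finset.mem_erase.mp hl).2).1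
    have hlj : l ≠ j := (Finset.mem_erase.mp hl).1
    refine ⟨![i,j,k,l], inj4 hij (Ne.symm hki) (Ne.symm hli) (Ne.symm hkj) (Ne.symm hlj)
      hkl, ?_⟩
    have hM : B.submatrix ![i,j,k,l] ![i,j,k,l] =
        Matrix.of !![0, 0, B i k, B i k; 0, 0, B j k, B j k;
                     B i k, B j k, 0, B k l; B i k, B j k, B k l, 0] := by
      rw [show ∀ M : Matrix (Fin 4) (Fin 4) (ZMod 3), Matrix.of M = M from fun _ => rfl]
      ext p q
      fin_cases p <;> fin_cases q <;>
        simp [hdiag, hBij, hik, hjk] <;>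
        first
          | exact hsym.apply _ _
          | (rw [hsym.apply]; assumption)
    rw [hM]
    exact help1 _ _ _
  · push_neg at h0
    have hB : ∀ i j : Fin n, i ≠ j → B i j ≠ 0 := h0
    set v : Fin n := ⟨0, by omega⟩ with hv
    set u : Fin n := ⟨1, by omega⟩ with hu
    have hvu : v ≠ u := by simp [hv, hu, Fin.ext_iff]
    have huv' : u ∈ Finset.univ.erase v := Finset.mem_erase.mpr ⟨Ne.symm hvu, Finset.mem_univ u⟩
    set s : Finset (Fin n) := (Finset.univ.erase v).erase u with hs
    have hscard : s.card = n - 2 := by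
      rw [hs, Finset.card_erase_of_mem huv', Finset.card_erase_of_mem (Finset.mem_univ v),
        Finset.card_univ, hcardn]
      omega
    have hmem : ∀ k ∈ s, k ≠ v ∧ k ≠ u := by
      intro k hk
      exact ⟨(Finset.mem_erase.mp (Finset.mem_erase.mp hk).2).1, (Finset.mem_erase.mp hk).1⟩
    set T1 : Finset (Fin n) := s.filter (fun k => B v u * B v k * B u k = 1) with hT1
    set T2 : Finset (Fin n) := s.filter (fun k => B v u * B v k * B u k = 2) with hT2
    have hsub : s ⊆ T1 ∪ T2 := by
      intro k hk
      obtain ⟨hkv, hku⟩ := hmem k hk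
      have hne : B v u * B v k * B u k ≠ 0 :=
        mul_ne_zero (mul_ne_zero (hB v u hvu) (hB v k (Ne.symm hkv))) (hB u k (Ne.symm hku))
      rcases zmod3_cases _ hne with h | h
      · exact Finset.mem_union_left _ (Finset.mem_filter.mpr ⟨hk, h⟩)
      · exact Finset.mem_union_right _ (Finset.mem_filter.mpr ⟨hk, h⟩)
    have hcards : s.card ≤ T1.card + T2.card :=
      le_trans (Finset.card_le_card hsub) (Finset.card_union_le _ _)
    have key : ∀ (cval : ZMod 3), cval ≠ 0 → ∀ T : Finset (Fin n),
        (∀ k ∈ T, k ∈ s ∧ B v u * B v k * B u k = cval) → 3 ≤ T.card →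
        ∃ f : Fin 4 → Fin n, Function.Injective f ∧ (B.submatrix f f).det = 0 := by
      intro cval hcval T hT hTcard
      obtain ⟨w, hw, x, hx, y, hy, hwx, hwy, hxy⟩ := three_of_card T hTcard
      obtain ⟨hws, hCw⟩ := hT w hw
      obtain ⟨hxs, hCx⟩ := hT x hx
      obtain ⟨hys, hCy⟩ := hT y hy
      obtain ⟨hwv, hwu⟩ := hmem w hws
      obtain ⟨hxv, hxu⟩ := hmem x hxs
      obtain ⟨hyv, hyu⟩ := hmem y hys
      by_cases hCwx : B v w * B v x * B w x = cval
      · exact quad B hsym hdiag hB v u w x hvu (Ne.symm hwv) (Ne.symm hxv) (Ne.symm hwu)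
          (Ne.symm hxu) hwx (by rw [hCw, hCx]) (by rw [hCw, hCwx])
      by_cases hCwy : B v w * B v y * B w y = cval
      · exact quad B hsym hdiag hB v u w y hvu (Ne.symm hwv) (Ne.symm hyv) (Ne.symm hwu)
          (Ne.symm hyu) hwy (by rw [hCw, hCy]) (by rw [hCw, hCwy])
      by_cases hCxy : B v x * B v y * B x y = cval
      · exact quad B hsym hdiag hB v u x y hvu (Ne.symm hxv) (Ne.symm hyv) (Ne.symm hxu)
          (Ne.symm hyu) hxy (by rw [hCx, hCy]) (by rw [hCx, hCxy])
      · have hne1 : B v w * B v x * B w x ≠ 0 :=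
          mul_ne_zero (mul_ne_zero (hB v w (Ne.symm hwv)) (hB v x (Ne.symm hxv))) (hB w x hwx)
        have hne2 : B v w * B v y * B w y ≠ 0 :=
          mul_ne_zero (mul_ne_zero (hB v w (Ne.symm hwv)) (hB v y (Ne.symm hyv))) (hB w y hwy)
        have hne3 : B v x * B v y * B x y ≠ 0 :=
          mul_ne_zero (mul_ne_zero (hB v x (Ne.symm hxv)) (hB v y (Ne.symm hyv))) (hB x y hxy)
        exact quad B hsym hdiag hB v w x y (Ne.symm hwv) (Ne.symm hxv) (Ne.symm hyv) hwx hwy hxy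
          (two_vals cval _ _ hcval hne1 hne2 hCwx hCwy)
          (two_vals cval _ _ hcval hne1 hne3 hCwx hCxy)
    rcases (by omega : 3 ≤ T1.card ∨ 3 ≤ T2.card) with h | h
    · exact key 1 (by decide) T1 (fun k hk => ⟨(Finset.mem_filter.mp hk).1,
        (Finset.mem_filter.mp hk).2⟩) h
    · exact key 2 (by decide) T2 (fun k hk => ⟨(Finset.mem_filter.mp hk).1,
        (Finset.mem_filter.mp hk).2⟩) h
end

section
/- Let p be a prime, let q be a power of p, and let F be a finite field with q elements. Let B be an n×n symmetric matrix over F whose epr-sequence begins NA, i.e., every diagonal entry of B is zero (ℓ_1 = N) and every 2×2 principal minor of B is nonzero (ℓ_2 = A). Let k be a positive integer, and suppose that every coloring of the 2-element subsets of an (n−1)-element set with q−1 colors admits a k-element subset all of whose 2-element subsets receive the same color (i.e., n ≥ R_{q−1}(k) + 1). Then for each i = 1, 2, …, k+1: (i) if i ≡ 1 (mod p), then B has a singular principal submatrix of order i (ℓ_i ∈ {N, S}); and (ii) if i ≢ 1 (mod p), then B has a nonsingular principal submatrix of order i (ℓ_i ∈ {A, S}). -/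
open Matrix

lemma sum_ite_ne_aux {R : Type*} [CommRing R] {m : ℕ} (j : Fin m) (C : R) :
    ∑ l : Fin m, (if j = l then 0 else C) = (m : R) * C - C := by
  have h : ∀ l : Fin m, (if j = l then (0:R) else C) = C - (if j = l then C else 0) := by
    intro l; by_cases h : j = l <;> simp [h]
  simp only [h, Finset.sum_sub_distrib, Finset.sum_const, Finset.card_univ,
    Fintype.card_fin, Finset.sum_ite_eq, Finset.mem_univ, if_true, nsmul_eq_mul]

lemma sum_ite_ne_aux2 {R : Type*} [CommRing R] {m : ℕ} (j t : Fin m) (C : R) :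
    ∑ l : Fin m, (if j = l then 0 else if l = t then C else 0)
      = if j = t then 0 else C := by
  have h : ∀ l : Fin m, (if j = l then (0:R) else if l = t then C else 0)
      = if l = t then (if j = t then 0 else C) else 0 := by
    intro l
    by_cases h1 : l = t
    · subst h1; by_cases h2 : j = l <;> simp [h2]
    · by_cases h2 : j = l <;> simp [h1, h2]
  simp only [h, Finset.sum_ite_eq', Finset.mem_univ, if_true]

theorem stmt8 {p q : ℕ} (hp : p.Prime) (hq : ∃ m : ℕ, 0 < m ∧ q = p ^ m)
    {F : Type*} [Field F] [Fintype F] (hF : Fintype.card F = q)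
    {n : ℕ} (B : Matrix (Fin n) (Fin n) F) (hsym : B.IsSymm)
    (h1 : eprN B 1) (h2 : eprA B 2)
    (k : ℕ) (hk : 0 < k)
    -- `n ≥ R_{q-1}(k) + 1`: every `(q-1)`-coloring of the 2-element subsets of
    -- an `(n-1)`-element set has a monochromatic subset of size `k`.
    (hRam : ∀ c : Fin (n - 1) → Fin (n - 1) → Fin (q - 1),
      ∃ (s : Finset (Fin (n - 1))) (a : Fin (q - 1)), s.card = k ∧
        ∀ i ∈ s, ∀ j ∈ s, i < j → c i j = a) :
    ∀ i : ℕ, 1 ≤ i → i ≤ k + 1 →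
      ((i ≡ 1 [MOD p]) →
        ∃ f : Fin i → Fin n, Function.Injective f ∧ (B.submatrix f f).det = 0) ∧
      (¬(i ≡ 1 [MOD p]) →
        ∃ f : Fin i → Fin n, Function.Injective f ∧ (B.submatrix f f).det ≠ 0) := by
  classical
  -- characteristic
  have hchar : CharP F p := by
    haveI := ringChar.charP F
    have hrprime : (ringChar F).Prime := CharP.char_is_prime F (ringChar F)
    have hdvd : ringChar F ∣ Fintype.card F := by
      rw [← CharP.cast_eq_zero_iff F (ringChar F) (Fintype.card F)]
      exact FiniteField.cast_card_eq_zero F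
    obtain ⟨m0, hm0, rfl⟩ := hq
    rw [hF] at hdvd
    have : ringChar F = p :=
      (Nat.prime_dvd_prime_iff_eq hrprime hp).mp (hrprime.dvd_of_dvd_pow hdvd)
    rw [← this]; exact ringChar.charP F
  haveI := hchar
  -- q - 1 > 0
  have hq1 : 0 < q - 1 := by
    have : 0 < Fintype.card Fˣ := Fintype.card_pos
    rwa [Fintype.card_units, hF] at this
  -- diagonal zero
  have hdiag : ∀ x, B x x = 0 := by
    intro x
    have := h1 (fun _ => x) (Function.injective_of_subsingleton _)
    simpa [Matrix.det_fin_one] using this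
  -- off-diagonal nonzero
  have hoff : ∀ x y, x ≠ y → B x y ≠ 0 := by
    intro x y hxy h0
    have hinj : Function.Injective (![x, y]) := by
      intro s t hst
      fin_cases s <;> fin_cases t <;> simp_all
    have := h2 ![x, y] hinj
    rw [Matrix.det_fin_two] at this
    have hyx : B y x = B x y := hsym.apply x y
    simp [Matrix.submatrix_apply, hdiag, h0, hyx] at this
  -- dispose of the degenerate case n = 0
  rcases Nat.eq_zero_or_pos n with rfl | hn
  · exfalso
    obtain ⟨s, a, hsc, -⟩ := hRam fun _ _ => ⟨0, hq1⟩
    have := Finset.card_le_univ s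
    simp [hsc] at this
    omega
  -- set-up: special vertex and embedding
  set z : Fin n := ⟨0, hn⟩ with hz
  let emb : Fin (n - 1) → Fin n := fun x => ⟨x.1 + 1, by have := x.2; omega⟩
  have hembz : ∀ x, emb x ≠ z := by
    intro x h
    have := congrArg Fin.val h
    simp [emb, hz] at this
  have hembinj : Function.Injective emb := by
    intro x y h
    have := congrArg Fin.val h
    simp only [emb] at this
    exact Fin.ext (by omega)
  have hcardu : Fintype.card Fˣ = q - 1 := by rw [Fintype.card_units, hF]
  let e : Fˣ ≃ Fin (q - 1) := Fintype.equivFinOfCardEq hcardu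
  -- the coloring
  let col : Fin (n - 1) → Fin (n - 1) → Fin (q - 1) := fun x y =>
    if h : B (emb x) (emb y) * (B z (emb x))⁻¹ * (B z (emb y))⁻¹ = 0 then ⟨0, hq1⟩
    else e (Units.mk0 _ h)
  obtain ⟨S, a, hScard, hmono⟩ := hRam col
  set c0 : F := ((e.symm a : Fˣ) : F) with hc0
  have hc0ne : c0 ≠ 0 := Units.ne_zero _
  have key : ∀ x ∈ S, ∀ y ∈ S, x ≠ y →
      B (emb x) (emb y) = c0 * B z (emb x) * B z (emb y) := by
    have main : ∀ x ∈ S, ∀ y ∈ S, x < y →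
        B (emb x) (emb y) = c0 * B z (emb x) * B z (emb y) := by
      intro x hx y hy hxy
      have hcol := hmono x hx y hy hxy
      have hBxy : B (emb x) (emb y) ≠ 0 :=
        hoff _ _ fun h => (ne_of_lt hxy) (hembinj h)
      have hbx : B z (emb x) ≠ 0 := hoff _ _ fun h => hembz x h.symm
      have hby : B z (emb y) ≠ 0 := hoff _ _ fun h => hembz y h.symm
      have hne : B (emb x) (emb y) * (B z (emb x))⁻¹ * (B z (emb y))⁻¹ ≠ 0 :=
        mul_ne_zero (mul_ne_zero hBxy (inv_ne_zero hbx)) (inv_ne_zero hby)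
      have hcol' : e (Units.mk0 _ hne) = a := by
        rw [show col x y = e (Units.mk0 _ hne) from dif_neg hne] at hcol
        exact hcol
      have hval : B (emb x) (emb y) * (B z (emb x))⁻¹ * (B z (emb y))⁻¹ = c0 := by
        have := congrArg (fun u => ((e.symm u : Fˣ) : F)) hcol'
        simpa [hc0] using this
      field_simp at hval
      linear_combination hval
    intro x hx y hy hxy
    rcases lt_or_gt_of_ne hxy with h | h
    · exact main x hx y hy h
    · rw [hsym.apply (emb y) (emb x), main y hy x hx h]; ring
  -- main part
  intro i hi1 hik
  obtain ⟨m, rfl⟩ : ∃ m, i = m + 1 := ⟨i - 1, by omega⟩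
  have hm : m ≤ k := by omega
  let g : Fin m → Fin (n - 1) := fun j => (S.orderIsoOfFin hScard (Fin.castLE hm j) : Fin (n - 1))
  have hgS : ∀ j, g j ∈ S := fun j => (S.orderIsoOfFin hScard _).2
  have hginj : Function.Injective g := by
    intro x y h
    have h2' : Fin.castLE hm x = Fin.castLE hm y :=
      (S.orderIsoOfFin hScard).injective (Subtype.coe_injective h)
    have hv := congrArg Fin.val h2'
    simp only [Fin.coe_castLE] at hv
    exact Fin.ext hv
  let d : Fin m → F := fun j => B z (emb (g j))
  have hdne : ∀ j, d j ≠ 0 := fun j => hoff _ _ fun h => hembz _ h.symm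
  have hdz : ∀ l, B z (emb (g l)) = d l := fun _ => rfl
  let f : Fin (m + 1) → Fin n := Fin.cases z fun j => emb (g j)
  have hfinj : Function.Injective f := by
    intro s t h
    rcases Fin.eq_zero_or_eq_succ s with rfl | ⟨s', rfl⟩ <;>
      rcases Fin.eq_zero_or_eq_succ t with rfl | ⟨t', rfl⟩ <;>
      simp only [f, Fin.cases_zero, Fin.cases_succ] at h
    · rfl
    · exact absurd h.symm (hembz _)
    · exact absurd h (hembz _)
    · exact congrArg Fin.succ (hginj (hembinj h))
  have hNe : ∀ j l : Fin m, B (emb (g j)) (emb (g l)) = if j = l then 0 else c0 * d j * d l := by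
    intro j l
    by_cases h : j = l
    · subst h; simp [hdiag]
    · rw [if_neg h]
      exact key _ (hgS j) _ (hgS l) fun hh => h (hginj hh)
  have hNs : ∀ j : Fin m, B (emb (g j)) z = d j := fun j => hsym.apply z (emb (g j))
  have hmod : (m + 1 ≡ 1 [MOD p]) ↔ ((m : F) = 0) := by
    rw [CharP.cast_eq_zero_iff F p m]
    constructor
    · intro h
      have := (Nat.modEq_iff_dvd' (by omega : 1 ≤ m + 1)).mp h.symm
      simpa using this
    · intro h
      have := (Nat.modEq_iff_dvd' (by omega : 1 ≤ m + 1)).mpr (by simpa using h)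
      exact this.symm
  constructor
  · -- singular case
    intro hM
    have hmF : (m : F) = 0 := hmod.mp hM
    refine ⟨f, hfinj, ?_⟩
    rw [← Matrix.exists_mulVec_eq_zero_iff]
    refine ⟨Fin.cases c0 (fun j => (d j)⁻¹), ?_, ?_⟩
    · intro h0
      exact hc0ne (by simpa using congrFun h0 0)
    · funext t
      rcases Fin.eq_zero_or_eq_succ t with rfl | ⟨t', rfl⟩
      · simp only [Matrix.mulVec, dotProduct, Pi.zero_apply]
        rw [Fin.sum_univ_succ]
        simp only [Matrix.submatrix_apply, Fin.cases_zero, Fin.cases_succ, f, hdiag, zero_mul,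
          hdz]
        rw [Finset.sum_congr rfl fun l _ => mul_inv_cancel₀ (hdne l)]
        simp [Finset.sum_const, hmF]
      · simp only [Matrix.mulVec, dotProduct, Pi.zero_apply]
        rw [Fin.sum_univ_succ]
        simp only [Matrix.submatrix_apply, Fin.cases_zero, Fin.cases_succ, f]
        rw [hNs t']
        simp only [hNe]
        have step : ∀ l : Fin m,
            (if t' = l then (0:F) else c0 * d t' * d l) * (d l)⁻¹
              = if t' = l then 0 else c0 * d t' := by
          intro l
          by_cases h : t' = l
          · simp [h]
          · rw [if_neg h, if_neg h, mul_assoc, mul_inv_cancel₀ (hdne l), mul_one]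
        rw [Finset.sum_congr rfl fun l _ => step l, sum_ite_ne_aux t' (c0 * d t'), hmF]
        ring
  · -- nonsingular case
    intro hM
    have hmF : (m : F) ≠ 0 := fun h => hM (hmod.mpr h)
    refine ⟨f, hfinj, ?_⟩
    set N := B.submatrix f f with hN
    let G : Matrix (Fin (m + 1)) (Fin (m + 1)) F := Matrix.of <|
      Fin.cases
        (Fin.cases (-(c0 * ((m : F) - 1) * (m : F)⁻¹)) fun l => (m : F)⁻¹ * (d l)⁻¹)
        (fun j => Fin.cases ((m : F)⁻¹ * (d j)⁻¹)
          fun l => (d j)⁻¹ * (d l)⁻¹ * (c0⁻¹ * (m : F)⁻¹ - if j = l then c0⁻¹ else 0))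
    have hN00 : N 0 0 = 0 := by
      show B z z = 0; exact hdiag z
    have hN0s : ∀ l, N 0 l.succ = d l := fun l => rfl
    have hNs0 : ∀ j, N j.succ 0 = d j := fun j => hNs j
    have hNss : ∀ j l, N j.succ l.succ = if j = l then 0 else c0 * d j * d l := fun j l => hNe j l
    have hG00 : G 0 0 = -(c0 * ((m : F) - 1) * (m : F)⁻¹) := rfl
    have hG0s : ∀ l, G 0 l.succ = (m : F)⁻¹ * (d l)⁻¹ := fun l => rfl
    have hGs0 : ∀ j, G j.succ 0 = (m : F)⁻¹ * (d j)⁻¹ := fun j => rfl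
    have hGss : ∀ j l, G j.succ l.succ
        = (d j)⁻¹ * (d l)⁻¹ * (c0⁻¹ * (m : F)⁻¹ - if j = l then c0⁻¹ else 0) := fun j l => rfl
    have hNG : N * G = 1 := by
      ext s t
      rw [Matrix.mul_apply]
      rcases Fin.eq_zero_or_eq_succ s with rfl | ⟨j, rfl⟩ <;>
        rcases Fin.eq_zero_or_eq_succ t with rfl | ⟨t', rfl⟩
      · -- (0,0)
        rw [Fin.sum_univ_succ]
        simp only [hN00, hN0s, hG00, hGs0, zero_mul]
        have step : ∀ l : Fin m, d l * ((m : F)⁻¹ * (d l)⁻¹) = (m : F)⁻¹ := by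
          intro l
          have h1 := hdne l
          field_simp
        rw [Finset.sum_congr rfl fun l _ => step l]
        simp only [Finset.sum_const, Finset.card_univ, Fintype.card_fin, nsmul_eq_mul,
          Matrix.one_apply_eq, zero_add]
        exact mul_inv_cancel₀ hmF
      · -- (0, succ t')
        rw [Fin.sum_univ_succ]
        simp only [hN00, hN0s, hG0s, hGss, zero_mul]
        have step : ∀ l : Fin m,
            d l * ((d l)⁻¹ * (d t')⁻¹ * (c0⁻¹ * (m : F)⁻¹ - if l = t' then c0⁻¹ else 0))
              = (d t')⁻¹ * c0⁻¹ * (m : F)⁻¹ - (if l = t' then (d t')⁻¹ * c0⁻¹ else 0) := by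
          intro l
          have h1 := hdne l
          have h2 := hdne t'
          by_cases h : l = t'
          · subst h; simp only [if_pos rfl, ↓reduceIte]; field_simp
          · simp only [if_neg h]; field_simp; ring
        rw [Finset.sum_congr rfl fun l _ => step l, Finset.sum_sub_distrib]
        simp only [Finset.sum_const, Finset.card_univ, Fintype.card_fin, nsmul_eq_mul,
          Finset.sum_ite_eq', Finset.mem_univ, if_true]
        rw [Matrix.one_apply_ne (Fin.succ_ne_zero t').symm]
        have h2 := hdne t'
        field_simp
        ring
      · -- (succ j, 0)
        rw [Fin.sum_univ_succ]
        simp only [hNs0, hNss, hG00, hGs0]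
        have step : ∀ l : Fin m,
            (if j = l then (0:F) else c0 * d j * d l) * ((m : F)⁻¹ * (d l)⁻¹)
              = if j = l then 0 else c0 * d j * (m : F)⁻¹ := by
          intro l
          have h1 := hdne l
          by_cases h : j = l
          · simp [h]
          · rw [if_neg h, if_neg h]; field_simp
        rw [Finset.sum_congr rfl fun l _ => step l, sum_ite_ne_aux j (c0 * d j * (m : F)⁻¹)]
        rw [Matrix.one_apply_ne (Fin.succ_ne_zero j)]
        field_simp
        ring
      · -- (succ j, succ t')
        rw [Fin.sum_univ_succ]
        simp only [hNs0, hNss, hG0s, hGss]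
        have step : ∀ l : Fin m,
            (if j = l then (0:F) else c0 * d j * d l)
                * ((d l)⁻¹ * (d t')⁻¹ * (c0⁻¹ * (m : F)⁻¹ - if l = t' then c0⁻¹ else 0))
              = (if j = l then 0 else d j * (d t')⁻¹ * (m : F)⁻¹)
                - (if j = l then 0 else if l = t' then d j * (d t')⁻¹ else 0) := by
          intro l
          have h1 := hdne l
          have h2 := hdne t'
          have h3 := hdne j
          by_cases h : j = l
          · simp [h]
          · simp only [if_neg h]
            by_cases h2' : l = t'
            · subst h2'; simp only [if_pos rfl, ↓reduceIte]; field_simp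
            · simp only [if_neg h2']; field_simp; ring
        rw [Finset.sum_congr rfl fun l _ => step l, Finset.sum_sub_distrib,
          sum_ite_ne_aux j (d j * (d t')⁻¹ * (m : F)⁻¹),
          sum_ite_ne_aux2 j t' (d j * (d t')⁻¹)]
        rw [Matrix.one_apply]
        simp only [Fin.succ_inj]
        have h2 := hdne t'
        have h3 := hdne j
        by_cases h : j = t'
        · subst h
          simp only [if_pos rfl, ↓reduceIte]
          field_simp
          ring
        · simp only [if_neg h]
          field_simp
          ring
    intro h0
    have hdet : N.det * G.det = 1 := by rw [← Matrix.det_mul, hNG, Matrix.det_one]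
    rw [h0, zero_mul] at hdet
    exact zero_ne_one hdet
end

section
/- Let B be an n×n symmetric matrix over the field F_3 = Z/3Z whose epr-sequence begins AN, i.e., every diagonal entry of B is nonzero (ℓ_1 = A) and every 2×2 principal minor of B is zero (ℓ_2 = N). Let k be a positive integer, and suppose that every coloring of the 2-element subsets of an (n−1)-element set with 2 colors admits a (3k+1)-element subset all of whose 2-element subsets receive the same color (i.e., n ≥ R(3k+1, 3k+1) + 1). Then for each i = 1, 2, …, k, B has a singular principal submatrix of order 3i+2 (the (3i+2)-th term of the epr-sequence of B is N or S). -/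
open Matrix

lemma myAuxDetZero {m : ℕ} (M : Matrix (Fin m) (Fin m) (ZMod 3)) (e δ : ZMod 3)
    (y v : Fin m → ZMod 3)
    (hM : ∀ p q, M p q = e * (y p * y q) + (if p = q then δ else 0))
    (hv : v ≠ 0)
    (h0 : ∀ q, e * y q * (∑ p, y p * v p) + δ * v q = 0) :
    M.det = 0 := by
  rw [← Matrix.exists_mulVec_eq_zero_iff]
  refine ⟨v, hv, funext fun q => ?_⟩
  have step : ∀ p, M q p * v p
      = e * y q * (y p * v p) + (if q = p then δ * v p else 0) := by
    intro p
    rw [hM q p]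
    split <;> ring
  calc (M *ᵥ v) q = ∑ p, M q p * v p := rfl
    _ = ∑ p, (e * y q * (y p * v p) + (if q = p then δ * v p else 0)) :=
        Finset.sum_congr rfl fun p _ => step p
    _ = e * y q * (∑ p, y p * v p) + δ * v q := by
        rw [Finset.sum_add_distrib, ← Finset.mul_sum, Finset.sum_ite_eq]
        simp
    _ = 0 := h0 q

theorem stmt10 {n : ℕ} (B : Matrix (Fin n) (Fin n) (ZMod 3)) (hsym : B.IsSymm)
    (h1 : eprA B 1) (h2 : eprN B 2)
    (k : ℕ) (hk : 0 < k)
    -- `n ≥ R(3k+1, 3k+1) + 1`: every 2-coloring of the 2-element subsets of an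
    -- `(n-1)`-element set has a monochromatic subset of size `3k + 1`.
    (hRam : ∀ c : Fin (n - 1) → Fin (n - 1) → Fin 2,
      ∃ (s : Finset (Fin (n - 1))) (a : Fin 2), s.card = 3 * k + 1 ∧
        ∀ i ∈ s, ∀ j ∈ s, i < j → c i j = a) :
    ∀ i : ℕ, 1 ≤ i → i ≤ k →
      ∃ f : Fin (3 * i + 2) → Fin n, Function.Injective f ∧
        (B.submatrix f f).det = 0 := by
  
  -- arithmetic facts in ZMod 3, all by decide
  have zsq : ∀ x : ZMod 3, x ≠ 0 → x * x = 1 := by decide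
  have ztwo : ∀ x : ZMod 3, x ≠ 0 → x ≠ 1 → x = 2 := by decide
  -- basic entry facts
  have hsymm : ∀ p q : Fin n, B q p = B p q := fun p q => hsym.apply p q
  have hdiag : ∀ t : Fin n, B t t ≠ 0 := by
    intro t
    have h := h1 (fun _ => t) (fun a b _ => Subsingleton.elim a b)
    rw [Matrix.det_fin_one] at h
    exact h
  have hoff : ∀ t u : Fin n, t ≠ u → B t u * B t u = B t t * B u u := by
    intro t u htu
    have hinj : Function.Injective (![t, u] : Fin 2 → Fin n) := by
      intro a b hab
      fin_cases a <;> fin_cases b <;> simp_all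
    have h := h2 ![t, u] hinj
    rw [Matrix.det_fin_two] at h
    simp only [Matrix.submatrix_apply, Matrix.cons_val_zero, Matrix.cons_val_one,
      Matrix.head_cons] at h
    rw [hsymm t u] at h
    linear_combination -h
  have hne : ∀ t u : Fin n, t ≠ u → B t u ≠ 0 := by
    intro t u htu h0
    have := hoff t u htu
    rw [h0, mul_zero] at this
    exact (mul_ne_zero (hdiag t) (hdiag u)) this.symm
  have hdd : ∀ t u : Fin n, t ≠ u → B t t * B u u = 1 := by
    intro t u htu
    rw [← hoff t u htu]
    exact zsq _ (hne t u htu)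
  -- size of n
  obtain ⟨s0, a0, hcard0, _⟩ := hRam (fun _ _ => 0)
  have hn1 : 3 * k + 1 ≤ n - 1 := by
    simpa [hcard0] using Finset.card_le_univ s0
  have hn : 3 * k + 2 ≤ n := by omega
  -- the distinguished vertex and the embedding
  set w : Fin n := ⟨n - 1, by omega⟩ with hw
  have hι : ∀ a : Fin (n - 1), a.1 < n := fun a => lt_of_lt_of_le a.2 (Nat.sub_le n 1)
  set ι : Fin (n - 1) → Fin n := fun a => ⟨a.1, hι a⟩ with hιdef
  have hιinj : Function.Injective ι := by
    intro a b hab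
    have h := congrArg Fin.val hab
    exact Fin.ext (show a.1 = b.1 from h)
  have hιw : ∀ a : Fin (n - 1), ι a ≠ w := by
    intro a hEq
    have : a.1 = n - 1 := congrArg Fin.val hEq
    omega
  set d : ZMod 3 := B w w with hd
  have hd0 : d ≠ 0 := hdiag w
  have hd2 : d * d = 1 := zsq d hd0
  have hDiagEq : ∀ t : Fin n, B t t = d := by
    intro t
    by_cases ht : t = w
    · rw [ht]
    · have h := hdd t w ht
      have h2 := zsq d hd0
      linear_combination d * h - B t t * h2
  -- the coloring
  obtain ⟨s, a, hcard, hmono⟩ := hRam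
    (fun p q => if B (ι p) (ι q) * (B (ι p) w * B (ι q) w) = 1 then 0 else 1)
  set γ : ZMod 3 := if a = 0 then 1 else 2 with hγdef
  have hγ0 : γ ≠ 0 := by
    rw [hγdef]; split <;> decide
  have hx2 : ∀ p : Fin (n - 1), B (ι p) w * B (ι p) w = 1 := by
    intro p
    rw [hoff _ _ (hιw p), hDiagEq]
    exact hd2
  have ht2 : ∀ p q : Fin (n - 1), (B (ι p) w * B (ι q) w) * (B (ι p) w * B (ι q) w) = 1 := by
    intro p q
    have h1' := hx2 p
    have h2' := hx2 q
    linear_combination (B (ι p) w * B (ι p) w) * h2' + h1'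
  have key : ∀ p ∈ s, ∀ q ∈ s, p < q →
      B (ι p) (ι q) * (B (ι p) w * B (ι q) w) = γ := by
    intro p hp q hq hpq
    have hc := hmono p hp q hq hpq
    have hpq' : ι p ≠ ι q := fun hEq =>
      (Fin.lt_iff_val_lt_val.mp hpq).ne (congrArg Fin.val (hιinj hEq)) |>.elim
    by_cases hX : B (ι p) (ι q) * (B (ι p) w * B (ι q) w) = 1
    · rw [if_pos hX] at hc
      rw [hX, hγdef, ← hc]
      decide
    · rw [if_neg hX] at hc
      have hXnz : B (ι p) (ι q) * (B (ι p) w * B (ι q) w) ≠ 0 := by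
        apply mul_ne_zero (hne _ _ hpq')
        intro h0
        have := ht2 p q
        rw [h0, mul_zero] at this
        exact zero_ne_one this
      rw [ztwo _ hXnz hX, hγdef, ← hc]
      decide
  have key2 : ∀ p ∈ s, ∀ q ∈ s, p ≠ q →
      B (ι p) (ι q) = γ * (B (ι p) w * B (ι q) w) := by
    intro p hp q hq hpq
    have hX : B (ι p) (ι q) * (B (ι p) w * B (ι q) w) = γ := by
      rcases lt_or_gt_of_ne hpq with h | h
      · exact key p hp q hq h
      · have hk2 := key q hq p hp h
        rw [hsymm (ι p) (ι q)] at hk2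
        linear_combination hk2
    have h2' := ht2 p q
    linear_combination (B (ι p) w * B (ι q) w) * hX - B (ι p) (ι q) * h2'
  -- now the main construction
  intro i hi1 hik
  obtain ⟨T, hTs, hTcard⟩ := Finset.exists_subset_card_eq (s := s) (n := 3 * i + 1)
    (by rw [hcard]; omega)
  set g : Fin (3 * i + 1) ≃o T := T.orderIsoOfFin hTcard with hg
  set f : Fin (3 * i + 2) → Fin n :=
    fun p => if h : (p : ℕ) < 3 * i + 1 then ι ((g ⟨p.1, h⟩ : Fin (n - 1))) else w with hf
  have hfval : ∀ (p : Fin (3 * i + 2)) (h : (p : ℕ) < 3 * i + 1),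
      f p = ι ((g ⟨p.1, h⟩ : Fin (n - 1))) := fun p h => dif_pos h
  have hfw : ∀ (p : Fin (3 * i + 2)), ¬ ((p : ℕ) < 3 * i + 1) → f p = w :=
    fun p h => dif_neg h
  have hmem : ∀ j : Fin (3 * i + 1), ((g j : Fin (n - 1))) ∈ s := fun j => hTs (g j).2
  have hfinj : Function.Injective f := by
    intro p q hpq
    by_cases hp : (p : ℕ) < 3 * i + 1 <;> by_cases hq : (q : ℕ) < 3 * i + 1
    · rw [hfval p hp, hfval q hq] at hpq
      have h3 : (⟨p.1, hp⟩ : Fin (3 * i + 1)) = ⟨q.1, hq⟩ :=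
        g.injective (Subtype.coe_injective (hιinj hpq))
      have h4 := congrArg Fin.val h3
      exact Fin.ext h4
    · rw [hfval p hp, hfw q hq] at hpq
      exact absurd hpq (hιw _)
    · rw [hfw p hp, hfval q hq] at hpq
      exact absurd hpq.symm (hιw _)
    · have hp2 := p.2
      have hq2 := q.2
      exact Fin.ext (by omega)
  refine ⟨f, hfinj, ?_⟩
  -- entries of the submatrix
  have hfneq : ∀ (p q : Fin (3 * i + 2)) (hp : (p:ℕ) < 3*i+1) (hq : (q:ℕ) < 3*i+1),
      p ≠ q → B (f p) (f q) = γ * (B (f p) w * B (f q) w) := by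
    intro p q hp hq hpq
    rw [hfval p hp, hfval q hq]
    apply key2 _ (hmem _) _ (hmem _)
    intro hEq
    apply hpq
    have h3 : (⟨p.1, hp⟩ : Fin (3 * i + 1)) = ⟨q.1, hq⟩ :=
      g.injective (Subtype.coe_injective hEq)
    have h4 := congrArg Fin.val h3
    exact Fin.ext h4
  have hγcase : γ = d ∨ γ = 2 * d := by
    have hdec : ∀ x z : ZMod 3, x ≠ 0 → z ≠ 0 → x = z ∨ x = 2 * z := by decide
    exact hdec γ d hγ0 hd0
  have hx2' : ∀ (p : Fin (3*i+2)), (p:ℕ) < 3*i+1 → B (f p) w * B (f p) w = 1 := by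
    intro p hp
    rw [hfval p hp]
    exact hx2 _
  have hBw : ∀ (p : Fin (3*i+2)), ¬((p:ℕ) < 3*i+1) → B (f p) w = d := by
    intro p hp
    rw [hfw p hp]
  have hBxx : ∀ (p : Fin (3*i+2)), B (f p) w * B (f p) w = 1 := by
    intro p
    by_cases hp : (p:ℕ) < 3*i+1
    · exact hx2' p hp
    · rw [hBw p hp]; exact hd2
  have hBx0 : ∀ (p : Fin (3*i+2)), B (f p) w ≠ 0 := by
    intro p h0
    have := hBxx p
    rw [h0, mul_zero] at this
    exact zero_ne_one this
  have hlast : ∀ p q : Fin (3*i+2), ¬((p:ℕ) < 3*i+1) → ¬((q:ℕ) < 3*i+1) → p = q := by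
    intro p q hp hq
    have hp2 := p.2
    have hq2 := q.2
    exact Fin.ext (by omega)
  rcases hγcase with hγd | hγd
  · -- rank one case : M = d • y yᵀ with y p = B (f p) w
    set y : Fin (3 * i + 2) → ZMod 3 := fun p => B (f p) w with hy
    have hyval : ∀ p, y p = B (f p) w := fun p => rfl
    have hM' : ∀ p q, B (f p) (f q) = d * (B (f p) w * B (f q) w) := by
      intro p q
      by_cases hpq : p = q
      · subst hpq
        rw [hDiagEq (f p), hBxx p, mul_one]
      · by_cases hp : (p:ℕ) < 3*i+1 <;> by_cases hq : (q:ℕ) < 3*i+1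
        · rw [hfneq p q hp hq hpq, hγd]
        · rw [hfw q hq, ← hd]
          linear_combination (-(B (f p) w)) * hd2
        · rw [hfw p hp, hsymm (f q) w, ← hd]
          linear_combination (-(B (f q) w)) * hd2
        · exact absurd (hlast p q hp hq) hpq
    have hM : ∀ p q, (B.submatrix f f) p q = d * (y p * y q) + (if p = q then 0 else 0) := by
      intro p q
      rw [Matrix.submatrix_apply, ite_self, add_zero, hyval, hyval]
      exact hM' p q
    have hy0 : ∀ p, y p ≠ 0 := by
      intro p
      rw [hyval]
      exact hBx0 p
    have h01 : (0 : ℕ) < 3 * i + 2 := by omega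
    have h11 : (1 : ℕ) < 3 * i + 2 := by omega
    set p0 : Fin (3 * i + 2) := ⟨0, h01⟩ with hp0
    set p1 : Fin (3 * i + 2) := ⟨1, h11⟩ with hp1
    have hp01 : p0 ≠ p1 := Fin.ne_of_val_ne (show (0:ℕ) ≠ 1 by omega)
    set v : Fin (3 * i + 2) → ZMod 3 :=
      fun p => (if p = p0 then 1 else 0) * y p1 - (if p = p1 then 1 else 0) * y p0 with hv
    have hvdef : ∀ p, v p =
        (if p = p0 then 1 else 0) * y p1 - (if p = p1 then 1 else 0) * y p0 := fun p => rfl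
    apply myAuxDetZero (B.submatrix f f) d 0 y v hM
    · intro hv0
      have h := congrFun hv0 p0
      rw [hvdef p0, if_pos rfl, if_neg hp01, one_mul, zero_mul, sub_zero] at h
      exact hy0 p1 h
    · intro q
      have hsum : (∑ p, y p * v p) = 0 := by
        have hterm : ∀ p, y p * v p =
            (if p = p0 then y p0 * y p1 else 0) - (if p = p1 then y p1 * y p0 else 0) := by
          intro p
          rw [hvdef p]
          by_cases hA : p = p0
          · subst hA
            rw [if_pos rfl, if_pos rfl, if_neg hp01, if_neg hp01]
            ring
          · rw [if_neg hA, if_neg hA]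
            by_cases hB : p = p1
            · subst hB
              rw [if_pos rfl, if_pos rfl]
              ring
            · rw [if_neg hB, if_neg hB]
              ring
        rw [Finset.sum_congr rfl fun p _ => hterm p, Finset.sum_sub_distrib,
          Finset.sum_ite_eq' Finset.univ p0 (fun _ => y p0 * y p1),
          Finset.sum_ite_eq' Finset.univ p1 (fun _ => y p1 * y p0)]
        simp only [Finset.mem_univ, ite_true]
        ring
      rw [hsum]
      ring
  · -- M = 2d (I + y yᵀ) case
    set y : Fin (3 * i + 2) → ZMod 3 :=
      fun p => if (p : ℕ) < 3 * i + 1 then B (f p) w else 2 * d with hy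
    have hyin : ∀ (p : Fin (3*i+2)), (p:ℕ) < 3*i+1 → y p = B (f p) w :=
      fun p hp => if_pos hp
    have hyout : ∀ (p : Fin (3*i+2)), ¬((p:ℕ) < 3*i+1) → y p = 2 * d :=
      fun p hp => if_neg hp
    have hyy : ∀ p, y p * y p = 1 := by
      intro p
      by_cases hp : (p:ℕ) < 3*i+1
      · rw [hyin p hp]; exact hBxx p
      · rw [hyout p hp]
        have hdec : ∀ z : ZMod 3, z * z = 1 → 2 * z * (2 * z) = 1 := by decide
        exact hdec d hd2
    have hy0 : ∀ p, y p ≠ 0 := by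
      intro p h0
      have := hyy p
      rw [h0, mul_zero] at this
      exact zero_ne_one this
    have hM : ∀ p q, (B.submatrix f f) p q
        = 2 * d * (y p * y q) + (if p = q then 2 * d else 0) := by
      intro p q
      rw [Matrix.submatrix_apply]
      by_cases hpq : p = q
      · subst hpq
        rw [if_pos rfl, hDiagEq (f p), hyy p]
        have hdec : ∀ z : ZMod 3, z ≠ 0 → 2 * z * 1 + 2 * z = z := by decide
        exact (hdec d hd0).symm
      · rw [if_neg hpq, add_zero]
        by_cases hp : (p:ℕ) < 3*i+1 <;> by_cases hq : (q:ℕ) < 3*i+1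
        · rw [hyin p hp, hyin q hq, hfneq p q hp hq hpq, hγd]
        · rw [hyin p hp, hyout q hq, hfw q hq]
          have hdec : ∀ z x : ZMod 3, z * z = 1 → x = 2 * z * (x * (2 * z)) := by decide
          exact hdec d (B (f p) w) hd2
        · rw [hyout p hp, hyin q hq, hfw p hp, hsymm (f q) w]
          have hdec : ∀ z x : ZMod 3, z * z = 1 → x = 2 * z * (2 * z * x) := by decide
          exact hdec d (B (f q) w) hd2
        · exact absurd (hlast p q hp hq) hpq
    apply myAuxDetZero (B.submatrix f f) (2 * d) (2 * d) y y hM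
    · intro h0
      exact hy0 ⟨0, by omega⟩ (congrFun h0 _)
    · intro q
      have hsum : (∑ p, y p * y p) = 2 := by
        rw [Finset.sum_congr rfl fun p _ => hyy p, Finset.sum_const, Finset.card_univ,
          Fintype.card_fin, nsmul_eq_mul, mul_one]
        push_cast
        have h3 : (3 : ZMod 3) = 0 := by decide
        rw [h3]
        ring
      rw [hsum]
      have hdec : ∀ z x : ZMod 3, 2 * z * x * 2 + 2 * z * x = 0 := by decide
      exact hdec d (y q)
end

section
/- Let B be an n×n symmetric matrix over the field F_3 = Z/3Z whose epr-sequence begins AN, i.e., every diagonal entry of B is nonzero (ℓ_1 = A) and every 2×2 principal minor of B is zero (ℓ_2 = N). If n ≥ 19, then B has a singular 5×5 principal submatrix; that is, the 5-th term of the epr-sequence of B is N or S. -/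
open Matrix

private lemma inj5 {α : Type*} {v1 v2 v3 v4 v5 : α} (h21 : v2 ≠ v1)
    (h31 : v3 ≠ v1) (h32 : v3 ≠ v2) (h41 : v4 ≠ v1) (h42 : v4 ≠ v2) (h43 : v4 ≠ v3)
    (h51 : v5 ≠ v1) (h52 : v5 ≠ v2) (h53 : v5 ≠ v3) (h54 : v5 ≠ v4) :
    Function.Injective ![v1, v2, v3, v4, v5] := by
  intro x y hxy
  fin_cases x <;> fin_cases y <;> simp_all

private lemma zmod3_or (x y z : ZMod 3) (hx : x * x = 1) (hy : y * y = 1) (hz : z * z = 1) :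
    x * y * z = 1 ∨ x * y * z = 2 := by revert x y z; decide

private lemma zmod3_key (x y z : ZMod 3) (h : x * y * z = 1) : y + z * (2 * x) = 0 := by
  revert x y z; decide

private lemma zmod3_key2 (x y z : ZMod 3) (h : x * y * z = 2) : z * y - 2 * x = 0 := by
  revert x y z; decide

theorem aux_sign {n : ℕ} (hn : 19 ≤ n) (C : Matrix (Fin n) (Fin n) (ZMod 3))
    (hCs : ∀ i j, C i j = C j i) (hCd : ∀ i, C i i = 1)
    (hC2 : ∀ i j, C i j * C i j = 1) :
    ∃ f : Fin 5 → Fin n, Function.Injective f ∧ (C.submatrix f f).det = 0 := by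
  classical
  have h3 : (3 : ZMod 3) = 0 := by decide
  set P : Fin n → Fin n → Finset (Fin n) :=
    fun i j => Finset.univ.filter (fun k => C i j * C i k * C j k = 1 ∧ k ≠ i ∧ k ≠ j)
    with hP
  by_cases hI : ∃ i j : Fin n, i ≠ j ∧ 3 ≤ (P i j).card
  · -- Case I : some pair has three positive triangles ⇒ proportional rows
    obtain ⟨i, j, hij, hc⟩ := hI
    obtain ⟨t, hts, htc⟩ := Finset.exists_subset_card_eq hc
    obtain ⟨a, b, c, hab, hac, hbc, rfl⟩ := Finset.card_eq_three.mp htc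
    have ha : a ∈ P i j := hts (by simp)
    have hb : b ∈ P i j := hts (by simp)
    have hc' : c ∈ P i j := hts (by simp)
    rw [hP, Finset.mem_filter] at ha hb hc'
    obtain ⟨-, hsa, hai, haj⟩ := ha
    obtain ⟨-, hsb, hbi, hbj⟩ := hb
    obtain ⟨-, hsc, hci, hcj⟩ := hc'
    refine ⟨![i, j, a, b, c], inj5 hij.symm hai haj
      hbi hbj hab.symm hci hcj hac.symm hbc.symm, ?_⟩
    · rw [← Matrix.exists_mulVec_eq_zero_iff]
      refine ⟨![1, 2 * C i j, 0, 0, 0], ?_, ?_⟩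
      · intro h
        have := congrFun h 0
        simp at this
      · funext r
        fin_cases r <;>
          simp [Matrix.mulVec, dotProduct, Fin.sum_univ_five, Matrix.submatrix_apply]
        · linear_combination hCd i + 2 * hC2 i j + h3
        · linear_combination hCs j i + 2 * C i j * hCd j + C i j * h3
        · linear_combination hCs a i + 2 * C i j * hCs a j +
            zmod3_key (C i j) (C i a) (C j a) hsa
        · linear_combination hCs b i + 2 * C i j * hCs b j +
            zmod3_key (C i j) (C i b) (C j b) hsb
        · linear_combination hCs c i + 2 * C i j * hCs c j +
            zmod3_key (C i j) (C i c) (C j c) hsc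
  · -- Case II : every pair has at most two positive triangles
    push_neg at hI
    have hII : ∀ i j : Fin n, i ≠ j → (P i j).card ≤ 2 := by
      intro i j h
      have := hI i j h
      omega
    have pick : ∀ s : Finset (Fin n), s.card ≤ 18 → ∃ v, v ∉ s := by
      intro s hs
      by_contra h
      push_neg at h
      have : s = Finset.univ := Finset.eq_univ_iff_forall.mpr h
      rw [this, Finset.card_univ, Fintype.card_fin] at hs
      omega
    have hn0 : 0 < n := by omega
    have hn1 : 1 < n := by omega
    set v1 : Fin n := ⟨0, hn0⟩ with hv1
    set v2 : Fin n := ⟨1, hn1⟩ with hv2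
    have h21 : v2 ≠ v1 := by
      intro h
      exact absurd (congrArg Fin.val h) (by norm_num)
    -- helper to turn non-membership into a negative triangle
    have neg_tri : ∀ i j k : Fin n, i ≠ j → k ≠ i → k ≠ j → k ∉ P i j →
        C i j * C i k * C j k = 2 := by
      intro i j k hij hki hkj hk
      rcases zmod3_or (C i j) (C i k) (C j k) (hC2 i j) (hC2 i k) (hC2 j k) with h | h
      · exact absurd (Finset.mem_filter.mpr ⟨Finset.mem_univ _, h, hki, hkj⟩) hk
      · exact h
    -- choose v3
    obtain ⟨v3, hv3⟩ := pick (insert v1 (insert v2 (P v1 v2))) (by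
      have h1 := Finset.card_insert_le v2 (P v1 v2)
      have h2 := Finset.card_insert_le v1 (insert v2 (P v1 v2))
      have h3 := hII v1 v2 h21.symm
      omega)
    have h31 : v3 ≠ v1 := by intro h; exact hv3 (by simp [h])
    have h32 : v3 ≠ v2 := by intro h; exact hv3 (by simp [h])
    have s123 : C v1 v2 * C v1 v3 * C v2 v3 = 2 :=
      neg_tri v1 v2 v3 h21.symm h31 h32 (fun h => hv3 (by simp [h]))
    -- choose v4
    obtain ⟨v4, hv4⟩ := pick (insert v1 (insert v2 (insert v3 (P v1 v2 ∪ P v1 v3)))) (by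
      have h1 := Finset.card_union_le (P v1 v2) (P v1 v3)
      have h2 := Finset.card_insert_le v3 (P v1 v2 ∪ P v1 v3)
      have h3 := Finset.card_insert_le v2 (insert v3 (P v1 v2 ∪ P v1 v3))
      have h4 := Finset.card_insert_le v1 (insert v2 (insert v3 (P v1 v2 ∪ P v1 v3)))
      have h5 := hII v1 v2 h21.symm
      have h6 := hII v1 v3 (Ne.symm h31)
      omega)
    have h41 : v4 ≠ v1 := by intro h; exact hv4 (by simp [h])
    have h42 : v4 ≠ v2 := by intro h; exact hv4 (by simp [h])
    have h43 : v4 ≠ v3 := by intro h; exact hv4 (by simp [h])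
    have s124 : C v1 v2 * C v1 v4 * C v2 v4 = 2 :=
      neg_tri v1 v2 v4 h21.symm h41 h42 (fun h => hv4 (by simp [h]))
    have s134 : C v1 v3 * C v1 v4 * C v3 v4 = 2 :=
      neg_tri v1 v3 v4 (Ne.symm h31) h41 h43 (fun h => hv4 (by simp [h]))
    -- choose v5
    obtain ⟨v5, hv5⟩ := pick
      (insert v1 (insert v2 (insert v3 (insert v4 (P v1 v2 ∪ P v1 v3 ∪ P v1 v4))))) (by
      have h1 := Finset.card_union_le (P v1 v2) (P v1 v3)
      have h1' := Finset.card_union_le (P v1 v2 ∪ P v1 v3) (P v1 v4)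
      have h2 := Finset.card_insert_le v4 (P v1 v2 ∪ P v1 v3 ∪ P v1 v4)
      have h3 := Finset.card_insert_le v3 (insert v4 (P v1 v2 ∪ P v1 v3 ∪ P v1 v4))
      have h4 := Finset.card_insert_le v2
        (insert v3 (insert v4 (P v1 v2 ∪ P v1 v3 ∪ P v1 v4)))
      have h5 := Finset.card_insert_le v1
        (insert v2 (insert v3 (insert v4 (P v1 v2 ∪ P v1 v3 ∪ P v1 v4))))
      have h6 := hII v1 v2 h21.symm
      have h7 := hII v1 v3 (Ne.symm h31)
      have h8 := hII v1 v4 (Ne.symm h41)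
      omega)
    have h51 : v5 ≠ v1 := by intro h; exact hv5 (by simp [h])
    have h52 : v5 ≠ v2 := by intro h; exact hv5 (by simp [h])
    have h53 : v5 ≠ v3 := by intro h; exact hv5 (by simp [h])
    have h54 : v5 ≠ v4 := by intro h; exact hv5 (by simp [h])
    have s125 : C v1 v2 * C v1 v5 * C v2 v5 = 2 :=
      neg_tri v1 v2 v5 h21.symm h51 h52 (fun h => hv5 (by simp [h]))
    have s135 : C v1 v3 * C v1 v5 * C v3 v5 = 2 :=
      neg_tri v1 v3 v5 (Ne.symm h31) h51 h53 (fun h => hv5 (by simp [h]))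
    have s145 : C v1 v4 * C v1 v5 * C v4 v5 = 2 :=
      neg_tri v1 v4 v5 (Ne.symm h41) h51 h54 (fun h => hv5 (by simp [h]))
    refine ⟨![v1, v2, v3, v4, v5],
      inj5 h21 h31 h32 h41 h42 h43 h51 h52 h53 h54, ?_⟩
    · rw [← Matrix.exists_mulVec_eq_zero_iff]
      refine ⟨![2, C v1 v2, C v1 v3, C v1 v4, C v1 v5], ?_, ?_⟩
      · intro h
        have h0 : (2 : ZMod 3) = 0 := congrFun h 0
        exact absurd h0 (by decide)
      · funext r
        fin_cases r <;>
          simp [Matrix.mulVec, dotProduct, Fin.sum_univ_five, Matrix.submatrix_apply]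
        · linear_combination 2 * hCd v1 + hC2 v1 v2 + hC2 v1 v3 + hC2 v1 v4 + hC2 v1 v5 +
            2 * h3
        · linear_combination 2 * hCs v2 v1 + C v1 v2 * hCd v2 +
            zmod3_key2 (C v1 v2) (C v1 v3) (C v2 v3) s123 +
            zmod3_key2 (C v1 v2) (C v1 v4) (C v2 v4) s124 +
            zmod3_key2 (C v1 v2) (C v1 v5) (C v2 v5) s125 + 3 * C v1 v2 * h3
        · linear_combination 2 * hCs v3 v1 + C v1 v3 * hCd v3 +
            C v1 v2 * hCs v3 v2 +
            zmod3_key2 (C v1 v3) (C v1 v2) (C v2 v3) (by linear_combination s123) +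
            zmod3_key2 (C v1 v3) (C v1 v4) (C v3 v4) s134 +
            zmod3_key2 (C v1 v3) (C v1 v5) (C v3 v5) s135 + 3 * C v1 v3 * h3
        · linear_combination 2 * hCs v4 v1 + C v1 v4 * hCd v4 +
            C v1 v2 * hCs v4 v2 + C v1 v3 * hCs v4 v3 +
            zmod3_key2 (C v1 v4) (C v1 v2) (C v2 v4) (by linear_combination s124) +
            zmod3_key2 (C v1 v4) (C v1 v3) (C v3 v4) (by linear_combination s134) +
            zmod3_key2 (C v1 v4) (C v1 v5) (C v4 v5) s145 + 3 * C v1 v4 * h3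
        · linear_combination 2 * hCs v5 v1 + C v1 v5 * hCd v5 +
            C v1 v2 * hCs v5 v2 + C v1 v3 * hCs v5 v3 + C v1 v4 * hCs v5 v4 +
            zmod3_key2 (C v1 v5) (C v1 v2) (C v2 v5) (by linear_combination s125) +
            zmod3_key2 (C v1 v5) (C v1 v3) (C v3 v5) (by linear_combination s135) +
            zmod3_key2 (C v1 v5) (C v1 v4) (C v4 v5) (by linear_combination s145) + 3 * C v1 v5 * h3

theorem stmt11 {n : ℕ} (hn : 19 ≤ n)
    (B : Matrix (Fin n) (Fin n) (ZMod 3)) (hsym : B.IsSymm)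
    (h1 : eprA B 1) (h2 : eprN B 2) :
    ∃ f : Fin 5 → Fin n, Function.Injective f ∧ (B.submatrix f f).det = 0 := by
  classical
  have hn0 : 0 < n := by omega
  -- every diagonal entry is nonzero
  have hd : ∀ i : Fin n, B i i ≠ 0 := by
    intro i
    have h := h1 ![i] (fun a b _ => Subsingleton.elim a b)
    rwa [Matrix.det_fin_one, Matrix.submatrix_apply, Matrix.cons_val_zero] at h
  -- 2x2 principal minors vanish
  have h2' : ∀ i j : Fin n, i ≠ j → B i i * B j j = B i j * B i j := by
    intro i j hij
    have hinj : Function.Injective ![i, j] := by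
      intro x y hxy
      fin_cases x <;> fin_cases y <;> simp_all
    have h := h2 ![i, j] hinj
    rw [Matrix.det_fin_two] at h
    simp only [Matrix.submatrix_apply, Matrix.cons_val_zero, Matrix.cons_val_one,
      Matrix.head_cons] at h
    have hji : B j i = B i j := hsym.apply i j
    linear_combination h + B i j * hji
  have hsq : ∀ x : ZMod 3, x ≠ 0 → x * x = 1 := by decide
  set i0 : Fin n := ⟨0, hn0⟩ with hi0
  obtain ⟨d, hdd⟩ : ∃ d, B i0 i0 = d := ⟨_, rfl⟩
  have hdne : d ≠ 0 := hdd ▸ hd i0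
  have hd2 : d * d = 1 := hsq d hdne
  -- all diagonal entries equal d
  have hdiag : ∀ i : Fin n, B i i = d := by
    intro i
    by_cases h : i = i0
    · rw [h]; exact hdd
    · have h11 := h2' i i0 h
      have hbne : B i i0 ≠ 0 := by
        intro hz
        rw [hz] at h11
        exact (mul_ne_zero (hd i) (hd i0)) (by linear_combination h11)
      have hb2 : B i i0 * B i i0 = 1 := hsq _ hbne
      have h12 : B i i * d = 1 := by rw [← hdd, h11, hb2]
      calc B i i = (B i i * d) * d := by rw [mul_assoc, hd2, mul_one]
        _ = d := by rw [h12, one_mul]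
  set C : Matrix (Fin n) (Fin n) (ZMod 3) := d • B with hC
  have hCs : ∀ i j, C i j = C j i := by
    intro i j
    simp only [hC, Matrix.smul_apply, smul_eq_mul]
    rw [hsym.apply j i]
  have hCd : ∀ i, C i i = 1 := by
    intro i
    simp only [hC, Matrix.smul_apply, smul_eq_mul]
    rw [hdiag i, hd2]
  have hC2 : ∀ i j, C i j * C i j = 1 := by
    intro i j
    by_cases h : i = j
    · rw [h]
      have := hCd j
      rw [this, mul_one]
    · simp only [hC, Matrix.smul_apply, smul_eq_mul]
      have := h2' i j h
      calc d * B i j * (d * B i j) = (d * d) * (B i j * B i j) := by ring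
        _ = B i i * B j j := by rw [hd2, one_mul, this]
        _ = d * d := by rw [hdiag i, hdiag j]
        _ = 1 := hd2
  obtain ⟨f, hfinj, hfdet⟩ := aux_sign hn C hCs hCd hC2
  refine ⟨f, hfinj, ?_⟩
  have hBC : B = d • C := by
    ext i j
    simp only [hC, Matrix.smul_apply, smul_eq_mul]
    calc B i j = (d * d) * B i j := by rw [hd2, one_mul]
      _ = d * (d * B i j) := by ring
  rw [hBC]
  have : (d • C).submatrix f f = d • (C.submatrix f f) := rfl
  rw [this, Matrix.det_smul, hfdet, mul_zero]
end

section
/- Let B be an n×n symmetric matrix over the field F_3 = Z/3Z whose epr-sequence begins AA, i.e., every diagonal entry of B is nonzero (ℓ_1 = A) and every 2×2 principal minor of B is nonzero (ℓ_2 = A). Then for every j with 3 ≤ j ≤ ⌈n/2⌉, the j-th term of the epr-sequence of B is not N; that is, B has a nonsingular j×j principal submatrix. -/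
open Matrix

lemma key_aux {n : ℕ} (B : Matrix (Fin n) (Fin n) (ZMod 3)) (hsym : B.IsSymm)
    (h2 : eprA B 2) (c : ZMod 3) (hc : c * c = 1) (S : Finset (Fin n))
    (hS : ∀ i ∈ S, B i i = c) (j : ℕ) (hj : j ≤ S.card) :
    ∃ f : Fin j → Fin n, Function.Injective f ∧ (B.submatrix f f).det ≠ 0 := by
  obtain ⟨t, hts, ht⟩ := Finset.exists_subset_card_eq hj
  have htS : ∀ i ∈ t, B i i = c := fun i hi => hS i (hts hi)
  set f : Fin j → Fin n := ⇑(t.orderEmbOfFin ht) with hf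
  have hfinj : Function.Injective f := (t.orderEmbOfFin ht).injective
  have hmem : ∀ x, f x ∈ t := fun x => t.orderEmbOfFin_mem ht x
  have hoff : ∀ x y : Fin j, x ≠ y → B (f x) (f y) = 0 := by
    intro x y hxy
    have hne : f x ≠ f y := fun h => hxy (hfinj h)
    set g : Fin 2 → Fin n := ![f x, f y] with hg
    have hginj : Function.Injective g := by
      intro a b hab
      fin_cases a <;> fin_cases b <;> simp_all [hg] <;>
        first
        | rfl
        | (exact absurd hab hne)
        | (exact absurd hab.symm hne)
    have hdet := h2 g hginj
    rw [Matrix.det_fin_two] at hdet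
    simp only [Matrix.submatrix_apply, hg, Matrix.cons_val_zero, Matrix.cons_val_one,
      Matrix.head_cons] at hdet
    have hsy : B (f y) (f x) = B (f x) (f y) := hsym.apply (f x) (f y)
    rw [hsy, htS _ (hmem x), htS _ (hmem y), hc] at hdet
    have key : ∀ e : ZMod 3, (1 : ZMod 3) - e * e ≠ 0 → e = 0 := by decide
    exact key _ hdet
  have heq : B.submatrix f f = Matrix.diagonal (fun _ => c) := by
    ext x y
    by_cases hxy : x = y
    · subst hxy
      simp [Matrix.diagonal, htS _ (hmem x)]
    · simp [Matrix.diagonal, hxy, hoff x y hxy]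
  refine ⟨f, hfinj, ?_⟩
  rw [heq, Matrix.det_diagonal]
  have hc0 : c ≠ 0 := by
    intro h; rw [h] at hc; simp at hc
  simp only [Finset.prod_const]
  exact pow_ne_zero _ hc0

theorem stmt12 {n : ℕ} (B : Matrix (Fin n) (Fin n) (ZMod 3)) (hsym : B.IsSymm)
    (h1 : eprA B 1) (h2 : eprA B 2) :
    ∀ j : ℕ, 3 ≤ j → j ≤ (n + 1) / 2 →
      ∃ f : Fin j → Fin n, Function.Injective f ∧ (B.submatrix f f).det ≠ 0 := by
  intro j _ hj2
  have hdiag : ∀ i : Fin n, B i i = 1 ∨ B i i = 2 := by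
    intro i
    have h := h1 (fun _ => i) (fun a b _ => Subsingleton.elim a b)
    rw [Matrix.det_fin_one] at h
    simp only [Matrix.submatrix_apply] at h
    revert h
    generalize B i i = e
    revert e; decide
  set S1 : Finset (Fin n) := Finset.univ.filter (fun i => B i i = 1) with hS1
  set S2 : Finset (Fin n) := Finset.univ.filter (fun i => B i i = 2) with hS2
  have hcard : S1.card + S2.card = n := by
    have := Finset.card_filter_add_card_filter_not
      (s := (Finset.univ : Finset (Fin n))) (p := fun i => B i i = 1)
    have heq2 : Finset.univ.filter (fun i => ¬ B i i = 1) = S2 := by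
      ext i
      simp only [Finset.mem_filter, Finset.mem_univ, true_and, hS2]
      constructor
      · intro h; rcases hdiag i with h1' | h2'
        · exact absurd h1' h
        · exact h2'
      · intro h h1'; rw [h1'] at h; exact absurd h (by decide)
    rw [heq2] at this
    simpa using this
  have hor : j ≤ S1.card ∨ j ≤ S2.card := by omega
  rcases hor with h | h
  · exact key_aux B hsym h2 1 (by decide) S1
      (fun i hi => (Finset.mem_filter.mp hi).2) j h
  · exact key_aux B hsym h2 2 (by decide) S2
      (fun i hi => (Finset.mem_filter.mp hi).2) j h
end

section
/- Let B be an n×n symmetric matrix over the field F_3 = Z/3Z with n ≥ 3 whose epr-sequence begins AAN, i.e., every 1×1 and every 2×2 principal minor of B is nonzero, and every 3×3 principal minor of B is zero. Then n ≤ 4; consequently the epr-sequence of B is one of AAN, AANA, AANN. -/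
open Matrix

theorem stmt13 {n : ℕ} (hn : 3 ≤ n)
    (B : Matrix (Fin n) (Fin n) (ZMod 3)) (hsym : B.IsSymm)
    (h1 : eprA B 1) (h2 : eprA B 2) (h3 : eprN B 3) :
    n ≤ 4 ∧ (n = 4 → (eprA B 4 ∨ eprN B 4)) := by
  -- diagonal entries are nonzero
  have hd : ∀ i : Fin n, B i i ≠ 0 := by
    intro i
    have := h1 (fun _ => i) (Function.injective_of_subsingleton _)
    simpa [Matrix.det_fin_one] using this
  -- symmetry pointwise
  have hs : ∀ i j : Fin n, B j i = B i j := fun i j => hsym.apply i j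
  -- off-diagonal zero when diagonals equal
  have hoff : ∀ i j : Fin n, i ≠ j → B i i = B j j → B i j = 0 := by
    intro i j hij heq
    have hinj : Function.Injective ![i, j] := by
      intro a b hab
      fin_cases a <;> fin_cases b <;> simp_all
    have hdet := h2 ![i, j] hinj
    rw [Matrix.det_fin_two] at hdet
    simp only [Matrix.submatrix_apply] at hdet
    have h0 : B i i * B j j - B i j * B j i ≠ 0 := by
      simpa using hdet
    rw [hs i j, heq] at h0
    have := hd j
    revert this h0
    generalize B j j = d
    generalize B i j = a
    revert d a
    decide
  -- key: any set on which the diagonal is constant (≠ 0) has ≤ 2 elements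
  have key : ∀ (v : ZMod 3) (s : Finset (Fin n)), v ≠ 0 →
      (∀ i ∈ s, B i i = v) → s.card ≤ 2 := by
    intro v s hv hsv
    by_contra hcard
    push_neg at hcard
    obtain ⟨t, hts, htc⟩ := Finset.exists_subset_card_eq hcard
    have e := t.orderIsoOfFin htc
    set f : Fin 3 → Fin n := fun a => (e a : Fin n) with hf
    have hfm : ∀ a, f a ∈ s := fun a => hts (e a).2
    have hfinj : Function.Injective f := by
      intro a b hab
      exact e.injective (Subtype.ext hab)
    have hdet := h3 f hfinj
    have hM : B.submatrix f f = Matrix.diagonal (fun _ => v) := by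
      ext a b
      by_cases hab : a = b
      · subst hab
        simp [Matrix.submatrix_apply, hsv _ (hfm a)]
      · rw [Matrix.diagonal_apply_ne _ hab]
        exact hoff (f a) (f b) (fun h => hab (hfinj h))
          ((hsv _ (hfm a)).trans (hsv _ (hfm b)).symm)
    rw [hM, Matrix.det_diagonal] at hdet
    simp only [Finset.prod_const] at hdet
    revert hdet
    revert hv
    generalize v = w
    revert w
    decide
  -- split indices by diagonal value
  have hsplit := Finset.card_filter_add_card_filter_not
    (s := (Finset.univ : Finset (Fin n))) (p := fun i => B i i = 1)
  have hc1 : (Finset.univ.filter (fun i => B i i = 1)).card ≤ 2 :=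
    key 1 _ (by decide) (fun i hi => (Finset.mem_filter.mp hi).2)
  have hc2 : (Finset.univ.filter (fun i => ¬ B i i = 1)).card ≤ 2 := by
    refine key 2 _ (by decide) (fun i hi => ?_)
    have h1' := (Finset.mem_filter.mp hi).2
    have h0' := hd i
    revert h1' h0'
    generalize B i i = d
    revert d
    decide
  have hn4 : n ≤ 4 := by
    simp only [Finset.card_univ, Fintype.card_fin] at hsplit
    omega
  refine ⟨hn4, fun hn4' => ?_⟩
  subst hn4'
  have hkey : ∀ f : Fin 4 → Fin 4, Function.Injective f →
      (B.submatrix f f).det = B.det := by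
    intro f hf
    have hbij : Function.Bijective f := Finite.injective_iff_bijective.mp hf
    exact Matrix.det_submatrix_equiv_self (Equiv.ofBijective f hbij) B
  by_cases hB : B.det = 0
  · right
    intro f hf
    rw [hkey f hf, hB]
  · left
    intro f hf
    rw [hkey f hf]
    exact hB
end

section
/- Let B be an n×n symmetric matrix over the field F_3 = Z/3Z with n ≥ 3 whose epr-sequence begins AAA (every principal minor of B of order 1, 2 and 3 is nonzero), and suppose B ≠ I_n and B ≠ 2I_n. Then there exist a nonzero scalar c ∈ F_3 and an n×n permutation matrix P such that cPᵀBP has the 2×2 block form [[I_p, F], [Fᵀ, 2I_{n−p}]], where p is an integer with ⌈n/2⌉ ≤ p ≤ n−1 and F is a p×(n−p) matrix having at most one nonzero entry in each row and at most one nonzero entry in each column. -/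
open Matrix

private lemma z1 : ∀ d : ZMod 3, d ≠ 0 → d = 1 ∨ d = 2 := by decide
private lemma z2 : ∀ d e a : ZMod 3, d ≠ 0 → d * e - a * a ≠ 0 → d = e → a = 0 := by decide
private lemma z3 : ∀ d1 d2 d3 a b c : ZMod 3,
    d1 ≠ 0 → d2 ≠ 0 → d3 ≠ 0 →
    d1 * d2 - a * a ≠ 0 → d1 * d3 - b * b ≠ 0 → d2 * d3 - c * c ≠ 0 →
    d1 * d2 * d3 - d1 * c * c - a * a * d3 + a * c * b + b * a * c - b * d2 * b ≠ 0 →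
    d1 = d2 → b = 0 ∨ c = 0 := by decide
private lemma z4 : ∀ d : ZMod 3, d = 1 ∨ d = 2 → 2 * d = 1 ∨ 2 * d = 2 := by decide
private lemma z5 : ∀ a b : ZMod 3, 2 * a = 2 * b → a = b := by decide
private lemma z6 : ∀ a : ZMod 3, 2 * a = 0 ↔ a = 0 := by decide
private lemma z7 : ∀ d : ZMod 3, 2 * d = 1 ↔ d = 2 := by decide
private lemma z8 : ∀ d : ZMod 3, (d = 1 ∨ d = 2) → (¬ d = 1 ↔ d = 2) := by decide

private lemma two_mat {n : ℕ} : (2 : Matrix (Fin n) (Fin n) (ZMod 3)) = (2 : ZMod 3) • 1 := by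
  ext i j
  by_cases h : i = j <;>
    simp [← one_add_one_eq_two, Matrix.add_apply, Matrix.one_apply, Matrix.smul_apply, h]

private lemma core {n : ℕ} (B : Matrix (Fin n) (Fin n) (ZMod 3))
    (hsym : ∀ i j, B j i = B i j)
    (hdiag : ∀ i, B i i = 1 ∨ B i i = 2)
    (hsame : ∀ i j, i ≠ j → B i i = B j j → B i j = 0)
    (hkey : ∀ i j k, i ≠ j → i ≠ k → j ≠ k → B i i = B j j → B i k = 0 ∨ B j k = 0)
    (hB1 : B ≠ 1)
    (hbig : n ≤ 2 * (Finset.univ.filter (fun i => B i i = 1)).card) :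
    ∃ (σ : Equiv.Perm (Fin n)) (p : ℕ),
      (n + 1) / 2 ≤ p ∧ p ≤ n - 1 ∧
      (∀ i j : Fin n, i.val < p → j.val < p →
        B.submatrix σ σ i j = if i = j then 1 else 0) ∧
      (∀ i j : Fin n, p ≤ i.val → p ≤ j.val →
        B.submatrix σ σ i j = if i = j then 2 else 0) ∧
      (∀ i j₁ j₂ : Fin n, i.val < p → p ≤ j₁.val → p ≤ j₂.val → j₁ ≠ j₂ →
        B.submatrix σ σ i j₁ = 0 ∨ B.submatrix σ σ i j₂ = 0) ∧
      (∀ i₁ i₂ j : Fin n, i₁.val < p → i₂.val < p → i₁ ≠ i₂ → p ≤ j.val →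
        B.submatrix σ σ i₁ j = 0 ∨ B.submatrix σ σ i₂ j = 0) := by
  classical
  set S : Finset (Fin n) := Finset.univ.filter (fun i => B i i = 1) with hSdef
  set p : ℕ := S.card with hpdef
  have hpn : p ≤ n := by
    simpa using (Finset.card_le_univ S)
  have hScard : Sᶜ.card = n - p := by
    rw [Finset.card_compl]; simp [hpdef]
  have hplt : p ≤ n - 1 := by
    rcases Nat.lt_or_ge p n with h | h
    · omega
    · exfalso
      have hpn' : p = n := le_antisymm hpn h
      have hall : ∀ i, B i i = 1 := by
        intro i
        have : S = Finset.univ := Finset.eq_univ_of_card _ (by simp [← hpdef, hpn'])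
        have := this ▸ (Finset.mem_univ i)
        simpa [hSdef] using this
      apply hB1
      ext i j
      by_cases hij : i = j
      · subst hij; simp [Matrix.one_apply, hall i]
      · simp [Matrix.one_apply, hij, hsame i j hij ((hall i).trans (hall j).symm)]
  have hcast : n = p + (n - p) := by omega
  let e3 : Fin p ≃ {x // x ∈ S} := (S.orderIsoOfFin rfl).toEquiv
  let e4 : Fin (n - p) ≃ {x // x ∈ Sᶜ} := (Sᶜ.orderIsoOfFin hScard).toEquiv
  let e5 : {x // x ∈ Sᶜ} ≃ {x // ¬ x ∈ S} :=
    Equiv.subtypeEquivRight (fun x => Finset.mem_compl)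
  let σ : Equiv.Perm (Fin n) :=
    (finCongr hcast).trans <|
      finSumFinEquiv.symm.trans <|
        (Equiv.sumCongr e3 (e4.trans e5)).trans (Equiv.sumCompl (· ∈ S))
  have hmem : ∀ j : Fin n, σ j ∈ S ↔ j.val < p := by
    intro j
    show (Equiv.sumCompl (· ∈ S))
        ((Equiv.sumCongr e3 (e4.trans e5)) (finSumFinEquiv.symm (finCongr hcast j))) ∈ S
        ↔ j.val < p
    rcases hx : finSumFinEquiv.symm (finCongr hcast j) with a | b
    · have : finCongr hcast j = finSumFinEquiv (Sum.inl a) := by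
        rw [← hx]; simp
      have hv : (j : ℕ) = (a : ℕ) := by
        have := congrArg Fin.val this
        simpa [finSumFinEquiv] using this
      simp only [Equiv.sumCongr_apply, Sum.map_inl, Equiv.sumCompl_apply_inl]
      constructor
      · intro _; omega
      · intro _; exact (e3 a).2
    · have : finCongr hcast j = finSumFinEquiv (Sum.inr b) := by
        rw [← hx]; simp
      have hv : (j : ℕ) = p + (b : ℕ) := by
        have := congrArg Fin.val this
        simpa [finSumFinEquiv] using this
      simp only [Equiv.sumCongr_apply, Sum.map_inr, Equiv.sumCompl_apply_inr]
      constructor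
      · intro h; exact absurd h ((e4.trans e5) b).2
      · intro h; omega
  have hd1 : ∀ j : Fin n, j.val < p → B (σ j) (σ j) = 1 := by
    intro j hj
    have := (hmem j).2 hj
    simpa [hSdef] using this
  have hd2 : ∀ j : Fin n, p ≤ j.val → B (σ j) (σ j) = 2 := by
    intro j hj
    have h := (hmem j).not.2 (by omega)
    rcases hdiag (σ j) with h1 | h2
    · exact absurd (by simp [hSdef, h1]) h
    · exact h2
  refine ⟨σ, p, by omega, hplt, ?_, ?_, ?_, ?_⟩
  · intro i j hi hj
    by_cases hij : i = j
    · subst hij; simp [hd1 i hi]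
    · have : σ i ≠ σ j := fun h => hij (σ.injective h)
      simp [hij, hsame _ _ this ((hd1 i hi).trans (hd1 j hj).symm)]
  · intro i j hi hj
    by_cases hij : i = j
    · subst hij; simp [hd2 i hi]
    · have : σ i ≠ σ j := fun h => hij (σ.injective h)
      simp [hij, hsame _ _ this ((hd2 i hi).trans (hd2 j hj).symm)]
  · intro i j₁ j₂ hi hj₁ hj₂ hne
    have h12 : σ j₁ ≠ σ j₂ := fun h => hne (σ.injective h)
    have h1i : σ j₁ ≠ σ i := fun h => by
      have := σ.injective h; subst this; omega
    have h2i : σ j₂ ≠ σ i := fun h => by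
      have := σ.injective h; subst this; omega
    rcases hkey (σ j₁) (σ j₂) (σ i) h12 h1i h2i ((hd2 j₁ hj₁).trans (hd2 j₂ hj₂).symm) with h | h
    · left
      show B (σ i) (σ j₁) = 0
      rw [← hsym]; exact h
    · right
      show B (σ i) (σ j₂) = 0
      rw [← hsym]; exact h
  · intro i₁ i₂ j hi₁ hi₂ hne hj
    have h12 : σ i₁ ≠ σ i₂ := fun h => hne (σ.injective h)
    have h1j : σ i₁ ≠ σ j := fun h => by
      have := σ.injective h; subst this; omega
    have h2j : σ i₂ ≠ σ j := fun h => by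
      have := σ.injective h; subst this; omega
    exact hkey _ _ _ h12 h1j h2j ((hd1 i₁ hi₁).trans (hd1 i₂ hi₂).symm)

theorem stmt14 {n : ℕ} (hn : 3 ≤ n)
    (B : Matrix (Fin n) (Fin n) (ZMod 3)) (hsym : B.IsSymm)
    (h1 : eprA B 1) (h2 : eprA B 2) (h3 : eprA B 3)
    (hB1 : B ≠ 1) (hB2 : B ≠ 2) :
    -- there are a nonzero scalar `c` and a permutation `σ` (i.e., a permutation
    -- matrix `P`, with `PᵀBP = B.submatrix σ σ`) such that `M = c • PᵀBP` has
    -- the stated block form.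
    ∃ (c : ZMod 3) (σ : Equiv.Perm (Fin n)) (p : ℕ)
      (M : Matrix (Fin n) (Fin n) (ZMod 3)),
      c ≠ 0 ∧
      M = c • B.submatrix σ σ ∧
      (n + 1) / 2 ≤ p ∧ p ≤ n - 1 ∧
      -- the top-left `p × p` block is `I_p`
      (∀ i j : Fin n, i.val < p → j.val < p → M i j = if i = j then 1 else 0) ∧
      -- the bottom-right `(n-p) × (n-p)` block is `2 I_{n-p}`
      (∀ i j : Fin n, p ≤ i.val → p ≤ j.val → M i j = if i = j then 2 else 0) ∧
      -- the off-diagonal block `F` has at most one nonzero entry in each row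
      (∀ i j₁ j₂ : Fin n, i.val < p → p ≤ j₁.val → p ≤ j₂.val → j₁ ≠ j₂ →
        M i j₁ = 0 ∨ M i j₂ = 0) ∧
      -- and at most one nonzero entry in each column
      (∀ i₁ i₂ j : Fin n, i₁.val < p → i₂.val < p → i₁ ≠ i₂ → p ≤ j.val →
        M i₁ j = 0 ∨ M i₂ j = 0) := by
  classical
  have hsym' : ∀ i j, B j i = B i j := fun i j => hsym.apply i j
  have hd0 : ∀ i, B i i ≠ 0 := by
    intro i
    have := h1 (fun _ => i) (fun a b _ => Subsingleton.elim a b)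
    rwa [Matrix.det_fin_one, Matrix.submatrix_apply] at this
  have hdiag : ∀ i, B i i = 1 ∨ B i i = 2 := fun i => z1 _ (hd0 i)
  have h2' : ∀ i j, i ≠ j → B i i * B j j - B i j * B i j ≠ 0 := by
    intro i j hij
    have hinj : Function.Injective ![i, j] := by
      intro a b h; fin_cases a <;> fin_cases b <;> simp_all
    have := h2 ![i, j] hinj
    rw [Matrix.det_fin_two] at this
    show B i i * B j j - B i j * B i j ≠ 0
    rw [show B i j * B i j = B i j * B j i from by rw [hsym' i j]]
    exact this
  have hsame : ∀ i j, i ≠ j → B i i = B j j → B i j = 0 := by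
    intro i j hij hd
    exact z2 _ _ _ (hd0 i) (h2' i j hij) hd
  have hkey : ∀ i j k, i ≠ j → i ≠ k → j ≠ k → B i i = B j j → B i k = 0 ∨ B j k = 0 := by
    intro i j k hij hik hjk hd
    have hinj : Function.Injective ![i, j, k] := by
      intro a b h; fin_cases a <;> fin_cases b <;> simp_all
    have h33 := h3 ![i, j, k] hinj
    rw [Matrix.det_fin_three] at h33
    have h33' : B i i * B j j * B k k - B i i * B j k * B j k - B i j * B i j * B k k
        + B i j * B j k * B i k + B i k * B i j * B j k - B i k * B j j * B i k ≠ 0 := by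
      have e1 : B j i = B i j := hsym' i j
      have e2 : B k i = B i k := hsym' i k
      have e3 : B k j = B j k := hsym' j k
      show _ ≠ (0 : ZMod 3)
      rw [show B i i * B j j * B k k - B i i * B j k * B j k - B i j * B i j * B k k
            + B i j * B j k * B i k + B i k * B i j * B j k - B i k * B j j * B i k
          = B i i * B j j * B k k - B i i * B j k * B k j - B i j * B j i * B k k
            + B i j * B j k * B k i + B i k * B j i * B k j - B i k * B j j * B k i from by
        rw [e1, e2, e3]]
      exact h33
    exact z3 (B i i) (B j j) (B k k) (B i j) (B i k) (B j k)
      (hd0 i) (hd0 j) (hd0 k) (h2' i j hij) (h2' i k hik) (h2' j k hjk) h33' hd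
  by_cases hbig : n ≤ 2 * (Finset.univ.filter (fun i => B i i = 1)).card
  · obtain ⟨σ, p, hp1, hp2, c1, c2, c3, c4⟩ := core B hsym' hdiag hsame hkey hB1 hbig
    exact ⟨1, σ, p, B.submatrix σ σ, one_ne_zero, (one_smul _ _).symm,
      hp1, hp2, c1, c2, c3, c4⟩
  · set B' : Matrix (Fin n) (Fin n) (ZMod 3) := (2 : ZMod 3) • B with hB'def
    have hB'app : ∀ i j, B' i j = 2 * B i j := fun i j => rfl
    have hsym'' : ∀ i j, B' j i = B' i j := by
      intro i j; rw [hB'app, hB'app, hsym' i j]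
    have hdiag' : ∀ i, B' i i = 1 ∨ B' i i = 2 := by
      intro i; rw [hB'app]; exact z4 _ (hdiag i)
    have hsame' : ∀ i j, i ≠ j → B' i i = B' j j → B' i j = 0 := by
      intro i j hij hd
      rw [hB'app, hB'app] at hd
      rw [hB'app]
      exact (z6 _).2 (hsame i j hij (z5 _ _ hd))
    have hkey' : ∀ i j k, i ≠ j → i ≠ k → j ≠ k → B' i i = B' j j →
        B' i k = 0 ∨ B' j k = 0 := by
      intro i j k hij hik hjk hd
      rw [hB'app, hB'app] at hd
      rcases hkey i j k hij hik hjk (z5 _ _ hd) with h | h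
      · left; rw [hB'app, h, mul_zero]
      · right; rw [hB'app, h, mul_zero]
    have hB1' : B' ≠ 1 := by
      intro h
      apply hB2
      have : (2 : ZMod 3) • B' = (2 : ZMod 3) • (1 : Matrix (Fin n) (Fin n) (ZMod 3)) := by
        rw [h]
      rw [hB'def, smul_smul, show (2 : ZMod 3) * 2 = 1 from by decide, one_smul] at this
      rw [this]; exact two_mat.symm
    have hfe : Finset.univ.filter (fun i => B' i i = 1)
        = Finset.univ.filter (fun i => B i i = 2) := by
      apply Finset.filter_congr
      intro i _
      rw [hB'app]
      exact z7 _
    have hcards : (Finset.univ.filter (fun i => B i i = 1)).card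
        + (Finset.univ.filter (fun i => B i i = 2)).card = n := by
      have hpart := Finset.card_filter_add_card_filter_not
        (s := (Finset.univ : Finset (Fin n))) (p := fun i => B i i = 1)
      have : Finset.univ.filter (fun i => ¬ B i i = 1)
          = Finset.univ.filter (fun i => B i i = 2) := by
        apply Finset.filter_congr
        intro i _
        exact z8 _ (hdiag i)
      rw [this] at hpart
      simpa using hpart
    have hbig' : n ≤ 2 * (Finset.univ.filter (fun i => B' i i = 1)).card := by
      rw [hfe]; omega
    obtain ⟨σ, p, hp1, hp2, c1, c2, c3, c4⟩ := core B' hsym'' hdiag' hsame' hkey' hB1' hbig'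
    refine ⟨2, σ, p, B'.submatrix σ σ, by decide, ?_, hp1, hp2, c1, c2, c3, c4⟩
    rfl
end

section
/- Let B be an n×n symmetric matrix over the field F_3 = Z/3Z with n ≥ 3, and suppose every principal minor of B of order 1, of order 2, and of order 3 is nonzero (the epr-sequence of B begins AAA). Then every principal minor of B of every order j ∈ {1,…,n} is nonzero; that is, epr(B) = AAA⋯A. -/
open Matrix

lemma key3 : ∀ a b c x y z : ZMod 3, a ≠ 0 → b ≠ 0 → c ≠ 0 → x ≠ 0 → y ≠ 0 →
    a * b - x * x ≠ 0 → a * c - y * y ≠ 0 → b * c - z * z ≠ 0 →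
    a * b * c - a * z * z - x * x * c + x * z * y + y * x * z - y * b * y = 0 := by
  decide

theorem stmt15 {n : ℕ} (hn : 3 ≤ n)
    (B : Matrix (Fin n) (Fin n) (ZMod 3)) (hsym : B.IsSymm)
    (h1 : eprA B 1) (h2 : eprA B 2) (h3 : eprA B 3) :
    ∀ j : ℕ, 1 ≤ j → j ≤ n → eprA B j := by
  have hsym' : ∀ i j, B j i = B i j := fun i j => hsym.apply i j
  -- all diagonal entries are nonzero
  have hd : ∀ i, B i i ≠ 0 := by
    intro i
    have := h1 (fun _ => i) (fun a b _ => Subsingleton.elim a b)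
    simpa [Matrix.det_fin_one] using this
  -- 2x2 principal minors nonzero
  have h2' : ∀ i j, i ≠ j → B i i * B j j - B i j * B i j ≠ 0 := by
    intro i j hij
    have hinj : Function.Injective (![i, j]) := by
      intro a b hab
      fin_cases a <;> fin_cases b <;> simp_all
    have := h2 ![i, j] hinj
    rw [Matrix.det_fin_two] at this
    simpa [hsym' i j] using this
  -- each row has at most one nonzero off-diagonal entry
  have hrow : ∀ i j k, j ≠ i → k ≠ i → j ≠ k → B i j ≠ 0 → B i k = 0 := by
    intro i j k hji hki hjk hx
    by_contra hy
    have hij := hji.symm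
    have hik := hki.symm
    have hkj := hjk.symm
    have hinj : Function.Injective (![i, j, k]) := by
      intro a b hab
      fin_cases a <;> fin_cases b <;> simp_all
    have hdet := h3 ![i, j, k] hinj
    rw [Matrix.det_fin_three] at hdet
    simp only [Matrix.submatrix_apply, Matrix.cons_val_zero, Matrix.cons_val_one,
      Matrix.head_cons, Matrix.cons_val_two, Matrix.tail_cons] at hdet
    rw [hsym' i j, hsym' i k, hsym' j k] at hdet
    exact hdet (by
      linear_combination key3 (B i i) (B j j) (B k k) (B i j) (B i k) (B j k)
        (hd i) (hd j) (hd k) hx hy (h2' i j hij) (h2' i k hik) (h2' j k hjk))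
  -- main argument
  intro j _ _ f hf
  intro hdet0
  obtain ⟨v, hv, hmv⟩ := (Matrix.exists_mulVec_eq_zero_iff).2 hdet0
  apply hv
  funext p
  set C : Matrix (Fin j) (Fin j) (ZMod 3) := B.submatrix f f with hC
  have eqrow : ∀ r : Fin j, ∑ s, C r s * v s = 0 := by
    intro r
    have := congrFun hmv r
    simpa [Matrix.mulVec, dotProduct] using this
  show v p = 0
  by_cases hcase : ∀ q, q ≠ p → C p q = 0
  · have eqp := eqrow p
    rw [Finset.sum_eq_single p (fun b _ hb => by rw [hcase b hb, zero_mul])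
      (fun h => absurd (Finset.mem_univ p) h)] at eqp
    have hCpp : C p p ≠ 0 := hd (f p)
    rcases mul_eq_zero.1 eqp with h | h
    · exact absurd h hCpp
    · exact h
  · push_neg at hcase
    obtain ⟨q, hqp, hCpq⟩ := hcase
    have hfqp : f q ≠ f p := fun h => hqp (hf h)
    have hBpq : B (f p) (f q) ≠ 0 := hCpq
    have hBqp : B (f q) (f p) ≠ 0 := by rw [hsym' (f p) (f q)]; exact hBpq
    -- all other entries in rows p and q vanish
    have hzp : ∀ r : Fin j, r ≠ p → r ≠ q → C p r = 0 := by
      intro r hrp hrq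
      exact hrow (f p) (f q) (f r) hfqp (fun h => hrp (hf h))
        (fun h => hrq (hf h).symm) hBpq
    have hzq : ∀ r : Fin j, r ≠ p → r ≠ q → C q r = 0 := by
      intro r hrp hrq
      exact hrow (f q) (f p) (f r) (fun h => hqp (hf h).symm)
        (fun h => hrq (hf h)) (fun h => hrp (hf h).symm) hBqp
    have hsum : ∀ (g : Fin j → ZMod 3),
        (∀ r, r ≠ p → r ≠ q → g r = 0) → ∑ r, g r = g p + g q := by
      intro g hg
      rw [show (g p + g q = ∑ r ∈ ({p, q} : Finset (Fin j)), g r) from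
        (Finset.sum_pair hqp.symm).symm]
      exact (Finset.sum_subset (Finset.subset_univ _) (by
        intro r _ hr
        simp only [Finset.mem_insert, Finset.mem_singleton] at hr
        push_neg at hr
        exact hg r hr.1 hr.2)).symm
    have eqp : C p p * v p + C p q * v q = 0 := by
      rw [← hsum (fun r => C p r * v r) (fun r h1 h2 => by show C p r * v r = 0; rw [hzp r h1 h2, zero_mul])]
      exact eqrow p
    have eqq : C q p * v p + C q q * v q = 0 := by
      rw [← hsum (fun r => C q r * v r) (fun r h1 h2 => by show C q r * v r = 0; rw [hzq r h1 h2, zero_mul])]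
      exact eqrow q
    have hCqp : C q p = C p q := hsym' (f p) (f q)
    rw [hCqp] at eqq
    have hminor : C p p * C q q - C p q * C p q ≠ 0 := h2' (f p) (f q) hfqp.symm
    have hv0 : (C p p * C q q - C p q * C p q) * v p = 0 := by
      linear_combination C q q * eqp - C p q * eqq
    rcases mul_eq_zero.1 hv0 with h | h
    · exact absurd h hminor
    · exact h
end

section
/- Let B be an n×n symmetric matrix over the field F_3 = Z/3Z with epr-sequence ℓ_1ℓ_2⋯ℓ_n, and suppose that for some k with 1 ≤ k ≤ n−3 one has ℓ_k = N and ℓ_{k+1} = ℓ_{k+2} = ℓ_{k+3} = A (i.e., NAAA occurs as a consecutive subsequence of epr(B)). Then k = 1, n ≤ 6, and epr(B) is one of NAAA (n = 4), NAAAN (n = 5), NAAANA (n = 6). -/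
open Matrix Function

section Helpers

lemma det_fin_four {R : Type*} [CommRing R] (M : Matrix (Fin 4) (Fin 4) R) :
    M.det =
      M 0 0*M 1 1*M 2 2*M 3 3 - M 0 0*M 1 1*M 2 3*M 3 2 - M 0 0*M 1 2*M 2 1*M 3 3 + M 0 0*M 1 2*M 2 3*M 3 1 + M 0 0*M 1 3*M 2 1*M 3 2 - M 0 0*M 1 3*M 2 2*M 3 1 - M 0 1*M 1 0*M 2 2*M 3 3 + M 0 1*M 1 0*M 2 3*M 3 2 + M 0 1*M 1 2*M 2 0*M 3 3 - M 0 1*M 1 2*M 2 3*M 3 0 - M 0 1*M 1 3*M 2 0*M 3 2 + M 0 1*M 1 3*M 2 2*M 3 0 + M 0 2*M 1 0*M 2 1*M 3 3 - M 0 2*M 1 0*M 2 3*M 3 1 - M 0 2*M 1 1*M 2 0*M 3 3 + M 0 2*M 1 1*M 2 3*M 3 0 + M 0 2*M 1 3*M 2 0*M 3 1 - M 0 2*M 1 3*M 2 1*M 3 0 - M 0 3*M 1 0*M 2 1*M 3 2 + M 0 3*M 1 0*M 2 2*M 3 1 + M 0 3*M 1 1*M 2 0*M 3 2 - M 0 3*M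 1 1*M 2 2*M 3 0 - M 0 3*M 1 2*M 2 0*M 3 1 + M 0 3*M 1 2*M 2 1*M 3 0 := by
  rw [Matrix.det_succ_row_zero]
  simp [Fin.sum_univ_succ, Matrix.det_fin_three, Fin.succAbove,
    show (Fin.succ 2 : Fin 4) = 3 by decide,
    show ((1 : Fin 4) < 3) = True by decide,
    show (Fin.castSucc 2 : Fin 4) = 2 by decide]
  ring


lemma toBlocks11_one {j r : ℕ} {F : Type*} [Field F] :
    (1 : Matrix (Fin j ⊕ Fin r) (Fin j ⊕ Fin r) F).toBlocks₁₁ = 1 := by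
  rw [← fromBlocks_one, Matrix.toBlocks_fromBlocks₁₁]

lemma toBlocks21_one {j r : ℕ} {F : Type*} [Field F] :
    (1 : Matrix (Fin j ⊕ Fin r) (Fin j ⊕ Fin r) F).toBlocks₂₁ = 0 := by
  rw [← fromBlocks_one, Matrix.toBlocks_fromBlocks₂₁]

lemma jacobi_core {F : Type*} [Field F] {m j r : ℕ} (M : Matrix (Fin m) (Fin m) F)
    (hM : IsUnit M.det) (e : Fin j ⊕ Fin r ≃ Fin m) :
    ((M⁻¹).submatrix (e ∘ Sum.inl) (e ∘ Sum.inl)).det * M.det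
      = (M.submatrix (e ∘ Sum.inr) (e ∘ Sum.inr)).det := by
  set M' : Matrix (Fin j ⊕ Fin r) (Fin j ⊕ Fin r) F := M.submatrix e e with hM'
  have hdet' : M'.det = M.det := det_submatrix_equiv_self e M
  have hmul : M' * (M⁻¹).submatrix e e = 1 := by
    rw [hM', submatrix_mul_equiv, Matrix.mul_nonsing_inv M hM, submatrix_one_equiv]
  set A := M'.toBlocks₁₁ with hA
  set Bb := M'.toBlocks₁₂ with hB
  set Cc := M'.toBlocks₂₁ with hC
  set D := M'.toBlocks₂₂ with hD
  set E := ((M⁻¹).submatrix e e).toBlocks₁₁ with hE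
  set G := ((M⁻¹).submatrix e e).toBlocks₂₁ with hG
  have h1 : A * E + Bb * G = 1 := by
    have h := hmul
    rw [← fromBlocks_toBlocks M', ← fromBlocks_toBlocks ((M⁻¹).submatrix e e),
      fromBlocks_multiply] at h
    have := congrArg Matrix.toBlocks₁₁ h
    simpa [Matrix.toBlocks_fromBlocks₁₁, toBlocks11_one] using this
  have h2 : Cc * E + D * G = 0 := by
    have h := hmul
    rw [← fromBlocks_toBlocks M', ← fromBlocks_toBlocks ((M⁻¹).submatrix e e),
      fromBlocks_multiply] at h
    have := congrArg Matrix.toBlocks₂₁ h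
    simpa [Matrix.toBlocks_fromBlocks₂₁, toBlocks21_one] using this
  have key : M' * fromBlocks E 0 G 1 = fromBlocks 1 Bb 0 D := by
    rw [← fromBlocks_toBlocks M', fromBlocks_multiply]
    simp [← hA, ← hB, ← hC, ← hD, h1, h2]
  have hdetkey := congrArg Matrix.det key
  rw [det_mul, det_fromBlocks_zero₁₂, det_fromBlocks_zero₂₁, det_one, det_one, one_mul,
    mul_one, hdet'] at hdetkey
  have hEfinal : E = (M⁻¹).submatrix (e ∘ Sum.inl) (e ∘ Sum.inl) := rfl
  have hDfinal : D = M.submatrix (e ∘ Sum.inr) (e ∘ Sum.inr) := rfl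
  rw [← hEfinal, ← hDfinal, mul_comm]
  exact hdetkey

lemma jacobi {F : Type*} [Field F] {m j r : ℕ} (hjr : j + r = m)
    (M : Matrix (Fin m) (Fin m) F) (hM : M.det ≠ 0)
    (g : Fin j → Fin m) (hg : Injective g) :
    ∃ g' : Fin r → Fin m, Injective g' ∧
      ((M⁻¹).submatrix g g).det * M.det = (M.submatrix g' g').det := by
  classical
  have h2 : Fintype.card ((Set.range g)ᶜ : Set (Fin m)) = r := by
    rw [Fintype.card_compl_set, Set.card_range_of_injective hg]
    simp; omega
  let e2 : Fin r ≃ ((Set.range g)ᶜ : Set (Fin m)) := (Fintype.equivFinOfCardEq h2).symm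
  let e : Fin j ⊕ Fin r ≃ Fin m :=
    (Equiv.sumCongr (Equiv.ofInjective g hg) e2).trans (Equiv.Set.sumCompl (Set.range g))
  have hel : e ∘ Sum.inl = g := by
    funext t
    simp [e, Equiv.Set.sumCompl_apply_inl]
  refine ⟨e ∘ Sum.inr, ?_, ?_⟩
  · exact (e.injective.comp Sum.inr_injective)
  · have := jacobi_core M (isUnit_iff_ne_zero.mpr hM) e
    rwa [hel] at this

lemma pigeon5 : ∀ v : Fin 5 → ZMod 3, (∀ t, v t ≠ 0) →
    ∃ t u w : Fin 5, t ≠ u ∧ t ≠ w ∧ u ≠ w ∧ v t = v u ∧ v t = v w := by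
  set_option maxRecDepth 10000 in decide


lemma sc_pair_zero (d x : ZMod 3) (hd : d ≠ 0) (h : d * d - x * x ≠ 0) : x = 0 := by
  revert hd h; revert d x; decide

lemma inj2 {m : ℕ} {i j : Fin m} (hij : i ≠ j) : Injective ![i, j] := by
  intro a b h
  fin_cases a <;> fin_cases b <;> simp_all

lemma inj3 {m : ℕ} {i j l : Fin m} (hij : i ≠ j) (hil : i ≠ l) (hjl : j ≠ l) :
    Injective ![i, j, l] := by
  intro a b h
  fin_cases a <;> fin_cases b <;> simp_all <;> simp_all [eq_comm]


lemma contra3 {m : ℕ} (hm : 5 ≤ m) (C : Matrix (Fin m) (Fin m) (ZMod 3))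
    (hs : C.IsSymm)
    (h1 : ∀ i, C i i ≠ 0)
    (h2 : ∀ i j, i ≠ j → (C.submatrix ![i, j] ![i, j]).det ≠ 0)
    (h3 : ∀ i j l, i ≠ j → i ≠ l → j ≠ l → (C.submatrix ![i, j, l] ![i, j, l]).det = 0) :
    False := by
  have emb : Fin 5 → Fin m := fun t => Fin.castLE hm t
  have hemb : Injective (fun t => Fin.castLE hm t : Fin 5 → Fin m) :=
    fun a b h => by exact Fin.castLE_injective hm h
  obtain ⟨t, u, w, htu, htw, huw, e1, e2⟩ := pigeon5 (fun t => C (Fin.castLE hm t) (Fin.castLE hm t))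
    (fun t => h1 _)
  set i := Fin.castLE hm t
  set j := Fin.castLE hm u
  set l := Fin.castLE hm w
  have hij : i ≠ j := fun h => htu (hemb h)
  have hil : i ≠ l := fun h => htw (hemb h)
  have hjl : j ≠ l := fun h => huw (hemb h)
  -- pairwise zero
  have key : ∀ a b : Fin m, a ≠ b → C a a = C b b → C a b = 0 := by
    intro a b hab heq
    have h := h2 a b hab
    rw [det_fin_two] at h
    simp only [submatrix_apply, cons_val_zero, cons_val_one, head_cons] at h
    rw [← heq, hs.apply a b] at h
    exact sc_pair_zero _ _ (h1 a) h
  have hij0 : C i j = 0 := key i j hij e1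
  have hil0 : C i l = 0 := key i l hil e2
  have hjl0 : C j l = 0 := key j l hjl (e1 ▸ e2)
  have h := h3 i j l hij hil hjl
  rw [det_fin_three] at h
  simp only [submatrix_apply, cons_val_zero, cons_val_one, head_cons, cons_val_two, tail_cons] at h
  rw [hij0, hil0, hjl0, hs.apply i j, hs.apply i l, hs.apply j l, hij0, hil0, hjl0,
    ← e1, ← e2] at h
  revert h
  have := h1 i
  revert this
  generalize C i i = d
  revert d
  decide

lemma pick4 : ∀ t u w : Fin 5, ∃ x : Fin 5, x ≠ t ∧ x ≠ u ∧ x ≠ w := by decide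



lemma contra4 (C : Matrix (Fin 5) (Fin 5) (ZMod 3)) (hs : C.IsSymm)
    (h1 : ∀ i, C i i ≠ 0)
    (h2 : ∀ i j : Fin 5, i ≠ j → (C.submatrix ![i, j] ![i, j]).det ≠ 0)
    (h3 : ∀ i j l : Fin 5, i ≠ j → i ≠ l → j ≠ l →
      (C.submatrix ![i, j, l] ![i, j, l]).det ≠ 0)
    (h4 : ∀ i j l m : Fin 5, i ≠ j → i ≠ l → i ≠ m → j ≠ l → j ≠ m → l ≠ m →
      (C.submatrix ![i, j, l, m] ![i, j, l, m]).det = 0) :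
    False := by
  obtain ⟨i, j, l, hij, hil, hjl, e1, e2⟩ := pigeon5 (fun t => C t t) (fun t => h1 t)
  obtain ⟨m, hmi, hmj, hml⟩ := pick4 i j l
  have key : ∀ a b : Fin 5, a ≠ b → C a a = C b b → C a b = 0 := by
    intro a b hab heq
    have h := h2 a b hab
    rw [det_fin_two] at h
    simp only [submatrix_apply, cons_val_zero, cons_val_one, head_cons] at h
    rw [← heq, hs.apply a b] at h
    exact sc_pair_zero _ _ (h1 a) h
  have hij0 : C i j = 0 := key i j hij e1
  have hil0 : C i l = 0 := key i l hil e2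
  have hjl0 : C j l = 0 := key j l hjl (e1 ▸ e2)
  have p2 : ∀ a : Fin 5, a ≠ m → C a a = C i i → C a a * C m m - C a m * C a m ≠ 0 := by
    intro a ham heq
    have h := h2 a m ham
    rw [det_fin_two] at h
    simp only [submatrix_apply, cons_val_zero, cons_val_one, head_cons] at h
    rwa [hs.apply a m] at h
  have p2i := p2 i hmi.symm rfl
  have p2j := p2 j hmj.symm e1.symm
  have p2l := p2 l hml.symm e2.symm
  rw [e1.symm] at p2j
  rw [e2.symm] at p2l
  have t3a := h3 i j m hij hmi.symm hmj.symm
  rw [det_fin_three] at t3a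
  simp only [submatrix_apply, cons_val_zero, cons_val_one, head_cons, cons_val_two, tail_cons] at t3a
  rw [hs.apply i j, hs.apply i m, hs.apply j m, hij0, ← e1] at t3a
  have t3b := h3 i l m hil hmi.symm hml.symm
  rw [det_fin_three] at t3b
  simp only [submatrix_apply, cons_val_zero, cons_val_one, head_cons, cons_val_two, tail_cons] at t3b
  rw [hs.apply i l, hs.apply i m, hs.apply l m, hil0, ← e2] at t3b
  have t3c := h3 j l m hjl hmj.symm hml.symm
  rw [det_fin_three] at t3c
  simp only [submatrix_apply, cons_val_zero, cons_val_one, head_cons, cons_val_two, tail_cons] at t3c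
  rw [hs.apply j l, hs.apply j m, hs.apply l m, hjl0, ← e1, ← e2] at t3c
  have q4 := h4 i j l m hij hil hmi.symm hjl hmj.symm hml.symm
  rw [det_fin_four] at q4
  simp only [submatrix_apply, cons_val_zero, cons_val_one, head_cons, cons_val_two, tail_cons,
    cons_val_three] at q4
  rw [hs.apply i j, hs.apply i l, hs.apply i m, hs.apply j l, hs.apply j m, hs.apply l m,
    hij0, hil0, hjl0, ← e1, ← e2] at q4
  have hd := h1 i
  have he := h1 m
  revert hd he p2i p2j p2l t3a t3b t3c q4
  generalize C i i = d
  generalize C m m = e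
  generalize C i m = p
  generalize C j m = q
  generalize C l m = r
  revert d e p q r
  decide

lemma inj4_s17 {m : ℕ} {i j l o : Fin m} (h1 : i ≠ j) (h2 : i ≠ l) (h3 : i ≠ o)
    (h4 : j ≠ l) (h5 : j ≠ o) (h6 : l ≠ o) : Injective ![i, j, l, o] := by
  intro a b h
  fin_cases a <;> fin_cases b <;> simp_all <;> simp_all [eq_comm]


lemma sc_two (γ x y : ZMod 3) (hγ : γ ≠ 0) (hx : x ≠ 0) (hy : y ≠ 0)
    (hxγ : x ≠ γ) (hyγ : y ≠ γ) : x = y := by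
  revert hγ hx hy hxγ hyγ; revert γ x y; decide


lemma ramsey_contra {n : ℕ} (hn : 7 ≤ n) (B : Matrix (Fin n) (Fin n) (ZMod 3))
    (hs : B.IsSymm) (hdiag : ∀ i, B i i = 0) (hoff : ∀ i j, i ≠ j → B i j ≠ 0)
    (hA4 : ∀ f : Fin 4 → Fin n, Injective f → (B.submatrix f f).det ≠ 0) : False := by
  -- mono triangle gives singular 4x4
  have mono : ∀ p q r o : Fin n, p ≠ q → p ≠ r → p ≠ o → q ≠ r → q ≠ o → r ≠ o →
      B p q * B p r * B q r = B p q * B p o * B q o →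
      B p q * B p r * B q r = B p r * B p o * B r o → False := by
    intro p q r o h1 h2 h3 h4 h5 h6 ht1 ht2
    have h := hA4 ![p, q, r, o] (inj4_s17 h1 h2 h3 h4 h5 h6)
    rw [det_fin_four] at h
    simp only [submatrix_apply, cons_val_zero, cons_val_one, head_cons, cons_val_two, tail_cons,
      cons_val_three] at h
    rw [hs.apply p q, hs.apply p r, hs.apply p o, hs.apply q r, hs.apply q o, hs.apply r o,
      hdiag p, hdiag q, hdiag r, hdiag o] at h
    revert h ht1 ht2
    have n1 := hoff p q h1
    have n2 := hoff p r h2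
    have n3 := hoff p o h3
    have n4 := hoff q r h4
    have n5 := hoff q o h5
    have n6 := hoff r o h6
    revert n1 n2 n3 n4 n5 n6
    generalize B p q = a
    generalize B p r = b
    generalize B p o = c
    generalize B q r = d
    generalize B q o = e
    generalize B r o = f
    revert a b c d e f
    set_option maxRecDepth 40000 in
    set_option synthInstance.maxHeartbeats 2000000 in
    set_option synthInstance.maxSize 2000 in
    decide
  set p0 : Fin n := ⟨0, by omega⟩ with hp0
  set p1 : Fin n := ⟨1, by omega⟩ with hp1
  have hver : ∀ t : Fin 5, (t : ℕ) + 2 < n := fun t => by omega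
  set ver : Fin 5 → Fin n := fun t => ⟨(t : ℕ) + 2, hver t⟩ with hverdef
  have hvne : ∀ t u : Fin 5, t ≠ u → ver t ≠ ver u := by
    intro t u h hh
    exact h (Fin.ext (by simpa [hverdef] using congrArg Fin.val hh))
  have h01 : p0 ≠ p1 := by simp [hp0, hp1, Fin.ext_iff]
  have h0v : ∀ t, p0 ≠ ver t := fun t h => by
    have := congrArg Fin.val h; change 0 = (t : ℕ) + 2 at this; omega
  have h1v : ∀ t, p1 ≠ ver t := fun t h => by
    have := congrArg Fin.val h; change 1 = (t : ℕ) + 2 at this; omega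
  set τ : Fin n → Fin n → Fin n → ZMod 3 := fun a b c => B a b * B a c * B b c with hτ
  have hτne : ∀ a b c, a ≠ b → a ≠ c → b ≠ c → τ a b c ≠ 0 := by
    intro a b c x y z
    exact mul_ne_zero (mul_ne_zero (hoff a b x) (hoff a c y)) (hoff b c z)
  obtain ⟨t, u, w, htu, htw, huw, e1, e2⟩ :=
    pigeon5 (fun t => τ p0 p1 (ver t)) (fun t => hτne _ _ _ h01 (h0v t) (h1v t))
  set a := ver t
  set b := ver u
  set c := ver w
  have hab : a ≠ b := hvne t u htu
  have hac : a ≠ c := hvne t w htw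
  have hbc : b ≠ c := hvne u w huw
  set γ := τ p0 p1 a with hγdef
  by_cases hx : τ p0 a b = γ
  · exact mono p0 p1 a b h01 (h0v t) (h0v u) (h1v t) (h1v u) hab e1 hx.symm
  · by_cases hy : τ p0 a c = γ
    · exact mono p0 p1 a c h01 (h0v t) (h0v w) (h1v t) (h1v w) hac e2 hy.symm
    · by_cases hz : τ p0 b c = γ
      · -- triangle (1, b, c): τ p0 p1 b = τ p0 p1 c = τ p0 b c
        exact mono p0 p1 b c h01 (h0v u) (h0v w) (h1v u) (h1v w) hbc (e1.symm.trans e2) (e1.symm.trans hz.symm)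
      · have hγ0 : γ ≠ 0 := hτne p0 p1 a h01 (h0v t) (h1v t)
        have hxy : τ p0 a b = τ p0 a c :=
          sc_two γ _ _ hγ0 (hτne p0 a b (h0v t) (h0v u) hab) (hτne p0 a c (h0v t) (h0v w) hac) hx hy
        have hxz : τ p0 a b = τ p0 b c :=
          sc_two γ _ _ hγ0 (hτne p0 a b (h0v t) (h0v u) hab) (hτne p0 b c (h0v u) (h0v w) hbc) hx hz
        exact mono p0 a b c (h0v t) (h0v u) (h0v w) hab hac hbc hxy hxz

lemma pigeon4 : ∀ μ : Fin 4 → ZMod 3, (∀ t, μ t ≠ 0) → ∃ t u, t ≠ u ∧ μ t = μ u := by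
  set_option maxRecDepth 10000 in decide

lemma pick2 : ∀ a : Fin 6, ∃ b c : Fin 6, b ≠ c ∧ b ≠ a ∧ c ≠ a := by decide

lemma sum_comp_compl {n k : ℕ} (s : Finset (Fin n)) (h : s.card = k) (g : Fin n → ZMod 3)
    (h0 : ∀ l, l ∉ s → g l = 0) :
    ∑ t : Fin k, g (s.orderIsoOfFin h t) = ∑ l, g l := by
  calc ∑ t : Fin k, g (s.orderIsoOfFin h t) = ∑ x : s, g x :=
        Fintype.sum_equiv (s.orderIsoOfFin h).toEquiv _ _ (fun t => rfl)
    _ = ∑ l ∈ s, g l := Finset.sum_coe_sort s g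
    _ = ∑ l, g l := Finset.sum_subset (Finset.subset_univ s) (fun x _ hx => h0 x hx)


lemma suppK (B : Matrix (Fin 6) (Fin 6) (ZMod 3))
    (hA4 : ∀ f : Fin 4 → Fin 6, Injective f → (B.submatrix f f).det ≠ 0)
    (v : Fin 6 → ZMod 3) (hv : B.mulVec v = 0) (i j : Fin 6) (hij : i ≠ j)
    (hvi : v i = 0) (hvj : v j = 0) : v = 0 := by
  by_contra hvne
  set s : Finset (Fin 6) := {i, j}ᶜ with hsdef
  have hcard : s.card = 4 := by
    rw [hsdef, Finset.card_compl, Finset.card_pair hij]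
    rfl
  set f : Fin 4 → Fin 6 := fun t => (s.orderIsoOfFin hcard t : Fin 6) with hfdef
  have hf : Injective f := by
    intro a b h
    exact (s.orderIsoOfFin hcard).injective (Subtype.ext h)
  have hvout : ∀ l, l ∉ s → v l = 0 := by
    intro l hl
    have h' : l = i ∨ l = j := by
      rw [hsdef, Finset.mem_compl, not_not] at hl
      simpa using hl
    rcases h' with h | h <;> simp [h, hvi, hvj]
  have hw : (B.submatrix f f).mulVec (v ∘ f) = 0 := by
    funext u
    have := sum_comp_compl s hcard (fun l => B (f u) l * v l)
      (fun l hl => mul_eq_zero_of_right _ (hvout l hl))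
    calc ((B.submatrix f f).mulVec (v ∘ f)) u
        = ∑ t : Fin 4, B (f u) (f t) * v (f t) := by
          simp [Matrix.mulVec, dotProduct]
      _ = ∑ l, B (f u) l * v l := this
      _ = (B.mulVec v) (f u) := by simp [Matrix.mulVec, dotProduct]
      _ = 0 := by rw [hv]; rfl
  have hwne : v ∘ f ≠ 0 := by
    obtain ⟨l, hl⟩ := Function.ne_iff.mp hvne
    have hls : l ∈ s := by
      by_contra h
      exact hl (hvout l h)
    intro h
    have : v (f ((s.orderIsoOfFin hcard).symm ⟨l, hls⟩)) = 0 := congrFun h _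
    rw [hfdef] at this
    simp only [OrderIso.apply_symm_apply] at this
    exact hl this
  exact hA4 f hf ((Matrix.exists_mulVec_eq_zero_iff).mp ⟨v ∘ f, hwne, hw⟩)

lemma build_x (B : Matrix (Fin 6) (Fin 6) (ZMod 3)) (hsym : B.IsSymm)
    (hA4 : ∀ f : Fin 4 → Fin 6, Injective f → (B.submatrix f f).det ≠ 0)
    (hN5 : ∀ f : Fin 5 → Fin 6, Injective f → (B.submatrix f f).det = 0)
    (v : Fin 6 → ZMod 3) (hv : B.mulVec v = 0) (i : Fin 6) (hvi : v i ≠ 0) :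
    ∃ x : Fin 6 → ZMod 3, B.mulVec x = 0 ∧ x i = 0 ∧ ∀ l, l ≠ i → x l ≠ 0 := by
  classical
  set s : Finset (Fin 6) := {i}ᶜ with hsdef
  have hcard : s.card = 5 := by
    rw [hsdef, Finset.card_compl, Finset.card_singleton]
    rfl
  set f : Fin 5 → Fin 6 := fun t => (s.orderIsoOfFin hcard t : Fin 6) with hfdef
  have hf : Injective f := fun a b h => (s.orderIsoOfFin hcard).injective (Subtype.ext h)
  have hdet : (B.submatrix f f).det = 0 := hN5 f hf
  obtain ⟨w, hwne, hw⟩ := (Matrix.exists_mulVec_eq_zero_iff).mpr hdet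
  set x : Fin 6 → ZMod 3 :=
    fun l => if h : l ∈ s then w ((s.orderIsoOfFin hcard).symm ⟨l, h⟩) else 0 with hxdef
  have hxi : x i = 0 := by
    rw [hxdef]
    have : i ∉ s := by simp [hsdef]
    simp [this]
  have hxf : ∀ t, x (f t) = w t := by
    intro t
    have hm : f t ∈ s := (s.orderIsoOfFin hcard t).2
    have h1 : x (f t) = w ((s.orderIsoOfFin hcard).symm ⟨f t, hm⟩) := dif_pos hm
    rw [h1]
    exact congrArg w ((s.orderIsoOfFin hcard).symm_apply_apply t)
  have hxout : ∀ l, l ∉ s → x l = 0 := by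
    intro l hl
    rw [hxdef]
    simp [hl]
  have hmem : ∀ l, l ≠ i → ∃ t, f t = l := by
    intro l hl
    have hls : l ∈ s := by simp [hsdef, hl]
    exact ⟨(s.orderIsoOfFin hcard).symm ⟨l, hls⟩, by
      rw [hfdef]; simp only [OrderIso.apply_symm_apply]⟩
  have hBx : ∀ l, l ≠ i → (B.mulVec x) l = 0 := by
    intro l hl
    obtain ⟨u, hu⟩ := hmem l hl
    have := sum_comp_compl s hcard (fun m => B l m * x m)
      (fun m hm => mul_eq_zero_of_right _ (hxout m hm))
    have hcalc : (B.mulVec x) l = ∑ t : Fin 5, B l (f t) * x (f t) := by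
      rw [Matrix.mulVec]
      simp only [dotProduct]
      exact this.symm
    rw [hcalc]
    have : ∑ t : Fin 5, B l (f t) * x (f t) = ((B.submatrix f f).mulVec w) u := by
      rw [← hu]
      simp only [Matrix.mulVec, dotProduct, Matrix.submatrix_apply]
      exact Finset.sum_congr rfl (fun t _ => by rw [hxf t])
    rw [this, hw]
    rfl
  have hBxi : (B.mulVec x) i = 0 := by
    have hdot : v ⬝ᵥ B.mulVec x = 0 := by
      rw [Matrix.dotProduct_mulVec]
      have hvm : B.vecMul v = 0 := by
        rw [show B = Bᵀ from hsym.symm, Matrix.vecMul_transpose, hv]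
      rw [hvm]
      exact zero_dotProduct x
    have hsum : v ⬝ᵥ B.mulVec x = v i * (B.mulVec x) i := by
      rw [dotProduct]
      exact Finset.sum_eq_single i
        (fun l _ hl => by rw [hBx l hl, mul_zero])
        (fun h => absurd (Finset.mem_univ i) h)
    rw [hsum] at hdot
    rcases mul_eq_zero.mp hdot with h | h
    · exact absurd h hvi
    · exact h
  have hBx0 : B.mulVec x = 0 := by
    funext l
    by_cases hl : l = i
    · rw [hl, hBxi]; rfl
    · rw [hBx l hl]; rfl
  refine ⟨x, hBx0, hxi, ?_⟩
  intro l hl hxl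
  have hx0 : x = 0 := suppK B hA4 x hBx0 l i hl hxl hxi
  obtain ⟨t, ht⟩ := Function.ne_iff.mp hwne
  apply ht
  have := hxf t
  rw [hx0] at this
  exact this.symm

lemma det6_ne (B : Matrix (Fin 6) (Fin 6) (ZMod 3)) (hsym : B.IsSymm)
    (hA4 : ∀ f : Fin 4 → Fin 6, Injective f → (B.submatrix f f).det ≠ 0)
    (hN5 : ∀ f : Fin 5 → Fin 6, Injective f → (B.submatrix f f).det = 0) :
    B.det ≠ 0 := by
  intro hdet
  obtain ⟨v, hvne, hv⟩ := (Matrix.exists_mulVec_eq_zero_iff).mpr hdet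
  have htwo : ∃ i j : Fin 6, i ≠ j ∧ v i ≠ 0 ∧ v j ≠ 0 := by
    by_contra hc
    obtain ⟨l0, hl0⟩ := Function.ne_iff.mp hvne
    obtain ⟨b, c, hbc, hbl, hcl⟩ := pick2 l0
    have hvb : v b = 0 := by
      by_contra hb
      exact hc ⟨l0, b, fun h => hbl h.symm, hl0, hb⟩
    have hvc : v c = 0 := by
      by_contra hcc
      exact hc ⟨l0, c, fun h => hcl h.symm, hl0, hcc⟩
    exact hvne (suppK B hA4 v hv b c hbc hvb hvc)
  obtain ⟨i, j, hij, hvi, hvj⟩ := htwo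
  obtain ⟨x, hx0, hxi, hxl⟩ := build_x B hsym hA4 hN5 v hv i hvi
  obtain ⟨y, hy0, hyj, hyl⟩ := build_x B hsym hA4 hN5 v hv j hvj
  set s2 : Finset (Fin 6) := {i, j}ᶜ with hs2def
  have hcard2 : s2.card = 4 := by
    rw [hs2def, Finset.card_compl, Finset.card_pair hij]
    rfl
  set g : Fin 4 → Fin 6 := fun t => (s2.orderIsoOfFin hcard2 t : Fin 6) with hgdef
  have hgmem : ∀ t, g t ≠ i ∧ g t ≠ j := by
    intro t
    have h2 : g t ∈ ({i, j}ᶜ : Finset (Fin 6)) := (s2.orderIsoOfFin hcard2 t).2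
    simp only [Finset.mem_compl, Finset.mem_insert, Finset.mem_singleton] at h2
    push_neg at h2
    exact h2
  set μ : Fin 4 → ZMod 3 := fun t => -(x (g t)) * (y (g t))⁻¹ with hμdef
  have hμne : ∀ t, μ t ≠ 0 := by
    intro t
    rw [hμdef]
    exact mul_ne_zero (neg_ne_zero.mpr (hxl _ (hgmem t).1))
      (inv_ne_zero (hyl _ (hgmem t).2))
  obtain ⟨t, u, htu, hμeq⟩ := pigeon4 μ hμne
  set z : Fin 6 → ZMod 3 := fun l => x l + μ t * y l with hzdef
  have hz0 : B.mulVec z = 0 := by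
    have : z = x + μ t • y := by
      funext l
      rw [hzdef]
      simp
    rw [this, Matrix.mulVec_add, Matrix.mulVec_smul, hx0, hy0, smul_zero, add_zero]
  have hzg : ∀ u' : Fin 4, μ u' = μ t → z (g u') = 0 := by
    intro u' hμu
    rw [hzdef]
    simp only
    rw [← hμu, hμdef]
    simp only
    have hy' : y (g u') ≠ 0 := hyl _ (hgmem u').2
    field_simp
    ring
  have hzt : z (g t) = 0 := hzg t rfl
  have hzu : z (g u) = 0 := hzg u hμeq.symm
  have hgtu : g t ≠ g u := by
    intro h
    exact htu ((s2.orderIsoOfFin hcard2).injective (Subtype.ext h))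
  have hzzero : z = 0 := suppK B hA4 z hz0 (g t) (g u) hgtu hzt hzu
  have : z i ≠ 0 := by
    rw [hzdef]
    simp only
    rw [hxi, zero_add]
    exact mul_ne_zero (hμne t) (hyl i (fun h => hij h))
  rw [hzzero] at this
  exact this rfl


end Helpers

set_option maxRecDepth 8000 in
set_option maxHeartbeats 1600000 in
theorem stmt17 {n : ℕ} (B : Matrix (Fin n) (Fin n) (ZMod 3)) (hsym : B.IsSymm)
    (k : ℕ) (hk1 : 1 ≤ k) (hkn : k + 3 ≤ n)
    (hN : eprN B k) (hA1 : eprA B (k + 1)) (hA2 : eprA B (k + 2))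
    (hA3 : eprA B (k + 3)) :
    k = 1 ∧ n ≤ 6 ∧ (5 ≤ n → eprN B 5) ∧ (n = 6 → eprA B 6) := by
  classical
  have hk : k = 1 := by
    by_contra hk1'
    set f : Fin (k + 3) → Fin n := Fin.castLE hkn with hfdef
    have hf : Injective f := Fin.castLE_injective hkn
    set M := B.submatrix f f with hMdef
    have hdet : M.det ≠ 0 := hA3 f hf
    have hMsEq : Mᵀ = M := by
      rw [hMdef, Matrix.transpose_submatrix]
      rw [show Bᵀ = B from hsym]
    have hCs : (M⁻¹).IsSymm := by
      show (M⁻¹)ᵀ = M⁻¹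
      rw [Matrix.transpose_nonsing_inv, hMsEq]
    have h1 : ∀ i, (M⁻¹) i i ≠ 0 := by
      intro i
      obtain ⟨g', hg', heq⟩ := jacobi (show 1 + (k + 2) = k + 3 by omega) M hdet
        (fun _ => i) (fun a b _ => Subsingleton.elim a b)
      have hr : (M.submatrix g' g').det ≠ 0 := by
        rw [hMdef, Matrix.submatrix_submatrix]
        exact hA2 (f ∘ g') (hf.comp hg')
      rw [← heq] at hr
      have := (mul_ne_zero_iff.mp hr).1
      rwa [Matrix.det_fin_one] at this
    have h2 : ∀ i j, i ≠ j → ((M⁻¹).submatrix ![i, j] ![i, j]).det ≠ 0 := by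
      intro i j hij
      obtain ⟨g', hg', heq⟩ := jacobi (show 2 + (k + 1) = k + 3 by omega) M hdet
        ![i, j] (inj2 hij)
      have hr : (M.submatrix g' g').det ≠ 0 := by
        rw [hMdef, Matrix.submatrix_submatrix]
        exact hA1 (f ∘ g') (hf.comp hg')
      rw [← heq] at hr
      exact (mul_ne_zero_iff.mp hr).1
    have h3 : ∀ i j l, i ≠ j → i ≠ l → j ≠ l →
        ((M⁻¹).submatrix ![i, j, l] ![i, j, l]).det = 0 := by
      intro i j l hij hil hjl
      obtain ⟨g', hg', heq⟩ := jacobi (show 3 + k = k + 3 by omega) M hdet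
        ![i, j, l] (inj3 hij hil hjl)
      have hr : (M.submatrix g' g').det = 0 := by
        rw [hMdef, Matrix.submatrix_submatrix]
        exact hN (f ∘ g') (hf.comp hg')
      rw [hr] at heq
      rcases mul_eq_zero.mp heq with h | h
      exacts [h, absurd h hdet]
    exact contra3 (by omega) (M⁻¹) hCs h1 h2 h3
  subst hk
  have hA2' : eprA B 2 := hA1
  have hA3' : eprA B 3 := hA2
  have hA4' : eprA B 4 := hA3
  have hN1 : eprN B 1 := hN
  have hdiag : ∀ i, B i i = 0 := by
    intro i
    have := hN1 (fun _ => i) (fun a b _ => Subsingleton.elim a b)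
    rwa [Matrix.det_fin_one] at this
  have hoff : ∀ i j, i ≠ j → B i j ≠ 0 := by
    intro i j hij h0
    have h := hA2' ![i, j] (inj2 hij)
    rw [det_fin_two] at h
    apply h
    simp only [submatrix_apply, cons_val_zero, cons_val_one, head_cons]
    rw [hdiag i, hdiag j, hsym.apply i j, h0]
    ring
  have hN5 : eprN B 5 := by
    intro f hf
    by_contra hdet
    set M := B.submatrix f f with hMdef
    have hMsEq : Mᵀ = M := by
      rw [hMdef, Matrix.transpose_submatrix]
      rw [show Bᵀ = B from hsym]
    have hCs : (M⁻¹).IsSymm := by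
      show (M⁻¹)ᵀ = M⁻¹
      rw [Matrix.transpose_nonsing_inv, hMsEq]
    have h1 : ∀ i, (M⁻¹) i i ≠ 0 := by
      intro i
      obtain ⟨g', hg', heq⟩ := jacobi (show 1 + 4 = 5 by omega) M hdet
        (fun _ => i) (fun a b _ => Subsingleton.elim a b)
      have hr : (M.submatrix g' g').det ≠ 0 := by
        rw [hMdef, Matrix.submatrix_submatrix]
        exact hA4' (f ∘ g') (hf.comp hg')
      rw [← heq] at hr
      have := (mul_ne_zero_iff.mp hr).1
      rwa [Matrix.det_fin_one] at this
    have h2 : ∀ i j : Fin 5, i ≠ j → ((M⁻¹).submatrix ![i, j] ![i, j]).det ≠ 0 := by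
      intro i j hij
      obtain ⟨g', hg', heq⟩ := jacobi (show 2 + 3 = 5 by omega) M hdet ![i, j] (inj2 hij)
      have hr : (M.submatrix g' g').det ≠ 0 := by
        rw [hMdef, Matrix.submatrix_submatrix]
        exact hA3' (f ∘ g') (hf.comp hg')
      rw [← heq] at hr
      exact (mul_ne_zero_iff.mp hr).1
    have h3 : ∀ i j l : Fin 5, i ≠ j → i ≠ l → j ≠ l →
        ((M⁻¹).submatrix ![i, j, l] ![i, j, l]).det ≠ 0 := by
      intro i j l hij hil hjl
      obtain ⟨g', hg', heq⟩ := jacobi (show 3 + 2 = 5 by omega) M hdet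
        ![i, j, l] (inj3 hij hil hjl)
      have hr : (M.submatrix g' g').det ≠ 0 := by
        rw [hMdef, Matrix.submatrix_submatrix]
        exact hA2' (f ∘ g') (hf.comp hg')
      rw [← heq] at hr
      exact (mul_ne_zero_iff.mp hr).1
    have h4 : ∀ i j l m : Fin 5, i ≠ j → i ≠ l → i ≠ m → j ≠ l → j ≠ m → l ≠ m →
        ((M⁻¹).submatrix ![i, j, l, m] ![i, j, l, m]).det = 0 := by
      intro i j l m hij hil him hjl hjm hlm
      obtain ⟨g', hg', heq⟩ := jacobi (show 4 + 1 = 5 by omega) M hdet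
        ![i, j, l, m] (inj4_s17 hij hil him hjl hjm hlm)
      have hr : (M.submatrix g' g').det = 0 := by
        rw [hMdef, Matrix.submatrix_submatrix]
        exact hN1 (f ∘ g') (hf.comp hg')
      rw [hr] at heq
      rcases mul_eq_zero.mp heq with h | h
      exacts [h, absurd h hdet]
    exact contra4 (M⁻¹) hCs h1 h2 h3 h4
  have hle : n ≤ 6 := by
    by_contra h
    exact ramsey_contra (by omega) B hsym hdiag hoff (fun g hg => hA4' g hg)
  refine ⟨rfl, hle, fun _ => hN5, ?_⟩
  intro hn6
  subst hn6
  intro f hf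
  have hbij : Bijective f := Finite.injective_iff_bijective.mp hf
  have hdetB := det6_ne B hsym (fun g hg => hA4' g hg) (fun g hg => hN5 g hg)
  rw [show B.submatrix f f
      = B.submatrix (Equiv.ofBijective f hbij) (Equiv.ofBijective f hbij) from rfl,
    det_submatrix_equiv_self]
  exact hdetB
end

section
/- Let B be an n×n symmetric matrix over the field F_3 = Z/3Z with n ≥ 4 whose epr-sequence begins NAAN, i.e., every diagonal entry of B is zero, every 2×2 and every 3×3 principal minor of B is nonzero, and every 4×4 principal minor of B is zero. Then for every i ∈ {1,…,n}: if i ≡ 1 (mod 3), then every principal minor of B of order i is zero (ℓ_i = N), and if i ≢ 1 (mod 3), then every principal minor of B of order i is nonzero (ℓ_i = A); that is, epr(B) is of one of the forms NAAN(AAN)*, NAAN(AAN)*A, NAAN(AAN)*AA, and equals the epr-sequence of J_n − I_n over F_3. -/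
open Matrix

lemma zmod3_sq : ∀ x : ZMod 3, x ≠ 0 → x * x = 1 := by decide

lemma zmod3_solve : ∀ x y z w : ZMod 3, x*x = 1 → y*y = 1 → x*y*z = w → z = w*x*y := by decide

lemma det4sym {R : Type*} [CommRing R] (M : Matrix (Fin 4) (Fin 4) R)
    (hd : ∀ p, M p p = 0) (hsy : ∀ p q, M q p = M p q) :
    M.det = (M 0 1)^2*(M 2 3)^2 + (M 1 2)^2*(M 0 3)^2 + (M 1 3)^2*(M 0 2)^2
      - (M 0 1)*(M 2 3)*(M 1 2)*(M 0 3)*2 - (M 0 1)*(M 2 3)*(M 1 3)*(M 0 2)*2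
      - (M 1 2)*(M 0 3)*(M 1 3)*(M 0 2)*2 := by
  have hM : M = !![0, M 0 1, M 0 2, M 0 3; M 0 1, 0, M 1 2, M 1 3;
      M 0 2, M 1 2, 0, M 2 3; M 0 3, M 1 3, M 2 3, 0] := by
    ext p q
    fin_cases p <;> fin_cases q <;>
      simp <;> first | exact hd _ | exact hsy _ _
  rw [hM]
  simp [Matrix.det_succ_row_zero, Fin.sum_univ_succ, Fin.succAbove,
    Fin.castSucc, Fin.castAdd, Fin.castLE, Matrix.cons_val_succ]
  ring

set_option maxRecDepth 4000 in
lemma key4 (a b c d e f : ZMod 3)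
    (h : a^2*f^2 + d^2*c^2 + e^2*b^2 - a*f*d*c*2 - a*f*e*b*2 - d*c*e*b*2 = 0) :
    a = 0 ∨ b = 0 ∨ c = 0 ∨ d = 0 ∨ e = 0 ∨ f = 0 ∨ a*b*d = a*c*e := by
  revert h; revert a b c d e f; decide

theorem stmt18 {n : ℕ} (hn : 4 ≤ n)
    (B : Matrix (Fin n) (Fin n) (ZMod 3)) (hsym : B.IsSymm)
    (h1 : eprN B 1) (h2 : eprA B 2) (h3 : eprA B 3) (h4 : eprN B 4) :
    ∀ i : ℕ, 1 ≤ i → i ≤ n →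
      ((i % 3 = 1 → eprN B i) ∧ (i % 3 ≠ 1 → eprA B i)) := by
  haveI : Fact (Nat.Prime 3) := ⟨by norm_num⟩
  have hs : ∀ p q : Fin n, B q p = B p q := fun p q => hsym.apply p q
  have hdiag : ∀ i : Fin n, B i i = 0 := by
    intro i
    have := h1 ![i] (fun p q _ => Subsingleton.elim p q)
    rw [Matrix.det_fin_one] at this; simpa using this
  have hoff : ∀ i j : Fin n, i ≠ j → B i j ≠ 0 := by
    intro i j hij hz
    apply h2 ![i, j] (by intro p q hpq; fin_cases p <;> fin_cases q <;> simp_all)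
    rw [Matrix.det_fin_two]
    simp [hz, hdiag, show B j i = 0 from (hs i j).symm ▸ hz]
  -- equality of triangle products inside a 4-subset
  have tri : ∀ i j k l : Fin n, i ≠ j → i ≠ k → i ≠ l → j ≠ k → j ≠ l → k ≠ l →
      B i j * B i k * B j k = B i j * B i l * B j l := by
    intro i j k l hij hik hil hjk hjl hkl
    have hinj : Function.Injective ![i, j, k, l] := by
      intro p q hpq; fin_cases p <;> fin_cases q <;> simp_all
    have h0 := h4 ![i, j, k, l] hinj
    rw [det4sym (B.submatrix ![i, j, k, l] ![i, j, k, l]) (fun p => hdiag _)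
      (fun p q => hs _ _)] at h0
    have e01 : B.submatrix ![i, j, k, l] ![i, j, k, l] 0 1 = B i j := by simp
    have e02 : B.submatrix ![i, j, k, l] ![i, j, k, l] 0 2 = B i k := by simp
    have e03 : B.submatrix ![i, j, k, l] ![i, j, k, l] 0 3 = B i l := by simp
    have e12 : B.submatrix ![i, j, k, l] ![i, j, k, l] 1 2 = B j k := by simp
    have e13 : B.submatrix ![i, j, k, l] ![i, j, k, l] 1 3 = B j l := by simp
    have e23 : B.submatrix ![i, j, k, l] ![i, j, k, l] 2 3 = B k l := by simp
    rw [e01, e02, e03, e12, e13, e23] at h0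
    rcases key4 (B i j) (B i k) (B i l) (B j k) (B j l) (B k l) (by linear_combination h0) with
      h | h | h | h | h | h | h
    · exact absurd h (hoff _ _ hij)
    · exact absurd h (hoff _ _ hik)
    · exact absurd h (hoff _ _ hil)
    · exact absurd h (hoff _ _ hjk)
    · exact absurd h (hoff _ _ hjl)
    · exact absurd h (hoff _ _ hkl)
    · exact h
  -- base points
  set i0 : Fin n := ⟨0, by omega⟩ with hi0def
  set i1 : Fin n := ⟨1, by omega⟩ with hi1def
  set i2 : Fin n := ⟨2, by omega⟩ with hi2def
  have h01 : i1 ≠ i0 := by simp [hi0def, hi1def, Fin.ext_iff]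
  have h02 : i2 ≠ i0 := by simp [hi0def, hi2def, Fin.ext_iff]
  have h12 : i1 ≠ i2 := by simp [hi1def, hi2def, Fin.ext_iff]
  set ε : ZMod 3 := B i0 i1 * B i0 i2 * B i1 i2 with hεdef
  have hεne : ε ≠ 0 :=
    mul_ne_zero (mul_ne_zero (hoff _ _ h01.symm) (hoff _ _ h02.symm)) (hoff _ _ h12)
  -- step: change the third vertex of a triangle through i0
  have step : ∀ x y z : Fin n, x ≠ i0 → y ≠ i0 → z ≠ i0 → x ≠ y → x ≠ z →
      B i0 x * B i0 y * B x y = B i0 x * B i0 z * B x z := by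
    intro x y z hx hy hz hxy hxz
    by_cases hyz : y = z
    · subst hyz; rfl
    · exact tri i0 x y z hx.symm hy.symm hz.symm hxy hxz hyz
  have tswap : ∀ x y : Fin n, B i0 x * B i0 y * B x y = B i0 y * B i0 x * B y x := by
    intro x y; rw [hs x y]; ring
  -- all triangle products through i0 are equal to ε
  have hT : ∀ i j : Fin n, i ≠ i0 → j ≠ i0 → i ≠ j → B i0 i * B i0 j * B i j = ε := by
    intro i j hi hj hij
    rw [hεdef]
    by_cases h1i : i = i1
    · subst h1i
      exact step i1 j i2 h01 hj h02 hij h12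
    · by_cases h2i : i = i2
      · subst h2i
        calc B i0 i2 * B i0 j * B i2 j = B i0 i2 * B i0 i1 * B i2 i1 :=
              step i2 j i1 h02 hj h01 hij (fun h => h12 h.symm)
          _ = B i0 i1 * B i0 i2 * B i1 i2 := (tswap i1 i2).symm
      · calc B i0 i * B i0 j * B i j = B i0 i * B i0 i1 * B i i1 :=
              step i j i1 hi hj h01 hij h1i
          _ = B i0 i1 * B i0 i * B i1 i := tswap i i1
          _ = B i0 i1 * B i0 i2 * B i1 i2 :=
              step i1 i i2 h01 hi h02 (fun h => h1i h.symm) h12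
  -- multiplicative structure of B
  set d : Fin n → ZMod 3 := fun i => if i = i0 then ε else B i0 i with hddef
  have hdne : ∀ i, d i ≠ 0 := by
    intro i
    by_cases h : i = i0
    · simp [hddef, h, hεne]
    · simp only [hddef, if_neg h]
      exact hoff _ _ (fun hh => h hh.symm)
  have hB : ∀ i j : Fin n, i ≠ j → B i j = ε * d i * d j := by
    intro i j hij
    by_cases hi : i = i0
    · subst hi
      have hj : j ≠ i0 := fun h => hij h.symm
      simp only [hddef, if_pos rfl, if_neg hj]
      have := zmod3_sq ε hεne
      linear_combination (-(B i0 j)) * this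
    · by_cases hj : j = i0
      · subst hj
        simp only [hddef, if_pos rfl, if_neg hi]
        have h2 := zmod3_sq ε hεne
        have h3 := hs i0 i
        linear_combination (-(B i0 i)) * h2 + h3
      · have ht := hT i j hi hj hij
        have hx := zmod3_sq (B i0 i) (hoff _ _ (fun h => hi h.symm))
        have hy := zmod3_sq (B i0 j) (hoff _ _ (fun h => hj h.symm))
        have := zmod3_solve (B i0 i) (B i0 j) (B i j) ε hx hy ht
        simp only [hddef, if_neg hi, if_neg hj]
        linear_combination this
  -- determinant of any principal submatrix
  have hdet : ∀ (k : ℕ) (f : Fin k → Fin n), Function.Injective f →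
      ∃ u : ZMod 3, u ≠ 0 ∧ (B.submatrix f f).det = u * (1 - (k : ZMod 3)) := by
    intro k f hf
    set e : Fin k → ZMod 3 := fun p => d (f p) with hedef
    have hM : B.submatrix f f =
        ε • (Matrix.diagonal e * ((Matrix.of fun _ _ => (1:ZMod 3)) - 1) * Matrix.diagonal e) := by
      ext p q
      by_cases hpq : p = q
      · subst hpq
        simp [Matrix.smul_apply, Matrix.mul_diagonal, Matrix.diagonal_mul, Matrix.sub_apply,
          Matrix.one_apply, hdiag]
      · have hne : f p ≠ f q := fun h => hpq (hf h)
        simp only [Matrix.submatrix_apply, Matrix.smul_apply, Matrix.mul_diagonal,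
          Matrix.diagonal_mul, Matrix.sub_apply, Matrix.one_apply, if_neg hpq, Matrix.of_apply,
          smul_eq_mul]
        rw [hB _ _ hne]
        ring
    have hJ : ((Matrix.of fun _ _ => (1:ZMod 3)) - 1 : Matrix (Fin k) (Fin k) (ZMod 3)) =
        -((1 : Matrix (Fin k) (Fin k) (ZMod 3)) +
          Matrix.replicateCol (Fin 1) (fun _ : Fin k => (1 : ZMod 3)) *
          Matrix.replicateRow (Fin 1) (fun _ : Fin k => (-1 : ZMod 3))) := by
      ext p q
      simp [Matrix.mul_apply, Matrix.one_apply, Matrix.replicateCol, Matrix.replicateRow, Matrix.sub_apply,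
        Matrix.neg_apply, Matrix.add_apply]
      split_ifs <;> ring
    refine ⟨ε ^ k * (-1) ^ k * (∏ p, e p)^2, ?_, ?_⟩
    · have hne1 : (-1 : ZMod 3) ≠ 0 := by
        intro hcon
        rw [neg_eq_zero] at hcon
        exact one_ne_zero hcon
      exact mul_ne_zero (mul_ne_zero (pow_ne_zero _ hεne) (pow_ne_zero _ hne1))
        (pow_ne_zero _ (Finset.prod_ne_zero_iff.mpr fun p _ => hdne _))
    · rw [hM, Matrix.det_smul, Matrix.det_mul, Matrix.det_mul, Matrix.det_diagonal, hJ,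
        Matrix.det_neg]
      erw [Matrix.det_one_add_replicateCol_mul_replicateRow]
      have hdp : (fun _ : Fin k => (-1:ZMod 3)) ⬝ᵥ (fun _ : Fin k => (1:ZMod 3)) = -(k : ZMod 3) := by
        simp [dotProduct]
      rw [hdp]
      simp only [Fintype.card_fin]
      ring
  -- conclusion
  intro i hi1 hin
  constructor
  · intro h3i f hf
    obtain ⟨u, hu, hd'⟩ := hdet i f hf
    rw [hd']
    have : (i : ZMod 3) = 1 := by
      rw [← ZMod.natCast_mod i 3, h3i]
      norm_num
    rw [this]
    ring
  · intro h3i f hf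
    obtain ⟨u, hu, hd'⟩ := hdet i f hf
    rw [hd']
    apply mul_ne_zero hu
    have hcast : (i : ZMod 3) = ((i % 3 : ℕ) : ZMod 3) := (ZMod.natCast_mod i 3).symm
    have hm : i % 3 = 0 ∨ i % 3 = 2 := by omega
    rcases hm with h | h <;> rw [hcast, h] <;> norm_num
end
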